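/- arXiv:1005.4105 — 9 statements merged into one kernel-verified Lean document; each statement's English description precedes it below -/
import Mathlib

section
/- The composite J ∘ K commutes with ρ(g) for every g ∈ G and satisfies (J∘K) ∘ (J∘K) = -id; V is the internal direct sum of W = ker(J∘K - i·id) and W⁻ = ker(J∘K + i·id), each of dimension 2 over E and invariant under ρ(g) for all g ∈ G; moreover K restricts to an E-linear isomorphism from W onto W⁻ such that K ∘ (ρ(g) restricted to W) = θ(g) · (ρ(g) restricted to W⁻) ∘ K for all g ∈ G, where θ(g) = 1 for g ∈ N and θ(g) = -1 for g ∉ N. In particular ρ is reducible, decomposing as the direct sum of a 2-dimensional representation σ and its twist σ ⊗ θ. (Theorem 3.1.2(2): QM over a quadratic field forces absolute reducibility.) -/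
open LinearMap Module

/-- Theorem 3.1.2(2): for quaternion multiplication over a quadratic field, the
composite `J ∘ K` commutes with the whole group action and squares to `-id`; its
`±i`-eigenspaces give a `G`-invariant direct sum decomposition of `V` into two
2-dimensional subspaces, and `K` intertwines the two constituents up to the
quadratic character `θ` of `G` with kernel `N`.  In particular `ρ` is reducible,
the direct sum of a 2-dimensional representation `σ` and its twist `σ ⊗ θ`. -/
theorem QM_over_quadratic_decomposes
    {E : Type*} [Field E] (htwo : (2 : E) ≠ 0) (i : E) (hi : i ^ 2 = -1)
    {V : Type*} [AddCommGroup V] [Module E V] (hdim : Module.finrank E V = 4)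
    {G : Type*} [Group G] (ρ : Representation E G V)
    (N : Subgroup G) (hN : N ≠ ⊤)
    (J K : V →ₗ[E] V)
    (hJ : J ∘ₗ J = -LinearMap.id) (hK : K ∘ₗ K = -LinearMap.id)
    (hJK : J ∘ₗ K = -(K ∘ₗ J))
    (hcJ : ∀ g ∈ N, J ∘ₗ ρ g = ρ g ∘ₗ J)
    (hcK : ∀ g ∈ N, K ∘ₗ ρ g = ρ g ∘ₗ K)
    (haJ : ∀ g ∉ N, J ∘ₗ ρ g = -(ρ g ∘ₗ J))
    (haK : ∀ g ∉ N, K ∘ₗ ρ g = -(ρ g ∘ₗ K)) :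
    (∀ g : G, (J ∘ₗ K) ∘ₗ ρ g = ρ g ∘ₗ (J ∘ₗ K)) ∧
    ((J ∘ₗ K) ∘ₗ (J ∘ₗ K) = -LinearMap.id) ∧
    IsCompl (LinearMap.ker ((J ∘ₗ K) - i • LinearMap.id))
        (LinearMap.ker ((J ∘ₗ K) + i • LinearMap.id)) ∧
    Module.finrank E (LinearMap.ker ((J ∘ₗ K) - i • LinearMap.id)) = 2 ∧
    Module.finrank E (LinearMap.ker ((J ∘ₗ K) + i • LinearMap.id)) = 2 ∧
    (∀ g : G, ∀ v ∈ LinearMap.ker ((J ∘ₗ K) - i • LinearMap.id),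
      ρ g v ∈ LinearMap.ker ((J ∘ₗ K) - i • LinearMap.id)) ∧
    (∀ g : G, ∀ v ∈ LinearMap.ker ((J ∘ₗ K) + i • LinearMap.id),
      ρ g v ∈ LinearMap.ker ((J ∘ₗ K) + i • LinearMap.id)) ∧
    Function.Injective K ∧
    Submodule.map K (LinearMap.ker ((J ∘ₗ K) - i • LinearMap.id))
      = LinearMap.ker ((J ∘ₗ K) + i • LinearMap.id) ∧
    (∀ g ∈ N, ∀ v ∈ LinearMap.ker ((J ∘ₗ K) - i • LinearMap.id),
      K (ρ g v) = ρ g (K v)) ∧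
    (∀ g ∉ N, ∀ v ∈ LinearMap.ker ((J ∘ₗ K) - i • LinearMap.id),
      K (ρ g v) = -(ρ g (K v))) := by
 classical
  have hJ' : ∀ x, J (J x) = -x := fun x => by
    have := LinearMap.ext_iff.mp hJ x; simpa using this
  have hK' : ∀ x, K (K x) = -x := fun x => by
    have := LinearMap.ext_iff.mp hK x; simpa using this
  have hJK' : ∀ x, J (K x) = -(K (J x)) := fun x => by
    have := LinearMap.ext_iff.mp hJK x; simpa using this
  set T : V →ₗ[E] V := J ∘ₗ K with hTdef
  have hT : ∀ x, T x = J (K x) := fun x => rfl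
  -- T squares to -id
  have hT2 : ∀ x, T (T x) = -x := by
    intro x
    rw [hT, hT, hJK' (J (K x)), hJ', map_neg, neg_neg, hK']
  have hT2' : T ∘ₗ T = -LinearMap.id := by
    ext x; simpa using hT2 x
  -- T commutes with ρ g
  have hcomm : ∀ g : G, T ∘ₗ ρ g = ρ g ∘ₗ T := by
    intro g
    by_cases hg : g ∈ N
    · have h1 := LinearMap.ext_iff.mp (hcJ g hg)
      have h2 := LinearMap.ext_iff.mp (hcK g hg)
      ext x
      simp only [LinearMap.comp_apply] at h1 h2 ⊢
      rw [hT, hT, h2, h1]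
    · have h1 := LinearMap.ext_iff.mp (haJ g hg)
      have h2 := LinearMap.ext_iff.mp (haK g hg)
      ext x
      simp only [LinearMap.comp_apply, LinearMap.neg_apply] at h1 h2 ⊢
      rw [hT, hT, h2, map_neg, h1]
      simp
  -- K anticommutes with T
  have hKT : ∀ x, T (K x) = -(K (T x)) := by
    intro x
    rw [hT, hT, hK', map_neg, hJK' x, map_neg, neg_neg, hK']
  -- membership criteria
  have hmemW : ∀ v, v ∈ LinearMap.ker (T - i • LinearMap.id) ↔ T v = i • v := by
    intro v
    simp [LinearMap.mem_ker, sub_eq_zero]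
  have hmemW' : ∀ v, v ∈ LinearMap.ker (T + i • LinearMap.id) ↔ T v = -(i • v) := by
    intro v
    simp [LinearMap.mem_ker, add_eq_zero_iff_eq_neg]
  have hi0 : i ≠ 0 := by
    intro h; rw [h] at hi; simp at hi
    try exact one_ne_zero (E := E) hi.symm
  have h2i : (2 : E) * i ≠ 0 := mul_ne_zero htwo hi0
  -- disjointness
  have hdisj : Disjoint (LinearMap.ker (T - i • LinearMap.id))
      (LinearMap.ker (T + i • LinearMap.id)) := by
    rw [Submodule.disjoint_def]
    intro v hv1 hv2
    rw [hmemW] at hv1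
    rw [hmemW'] at hv2
    have : ((2 : E) * i) • v = 0 := by
      have : i • v + i • v = 0 := by
        nth_rewrite 1 [← hv1]
        rw [hv2]; simp
      rw [two_mul, add_smul]; exact this
    rcases smul_eq_zero.mp this with h | h
    · exact absurd h h2i
    · exact h
  -- codisjointness
  have hcodisj : Codisjoint (LinearMap.ker (T - i • LinearMap.id))
      (LinearMap.ker (T + i • LinearMap.id)) := by
    rw [codisjoint_iff, eq_top_iff]
    intro v _
    rw [Submodule.mem_sup]
    refine ⟨(2⁻¹ : E) • (v - i • T v), ?_, (2⁻¹ : E) • (v + i • T v), ?_, ?_⟩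
    · refine Submodule.smul_mem _ _ ?_
      rw [hmemW]
      rw [map_sub, map_smul, hT2, smul_sub, smul_smul, ← pow_two, hi]
      simp
      try abel
    · refine Submodule.smul_mem _ _ ?_
      rw [hmemW']
      rw [map_add, map_smul, hT2, smul_add, smul_smul, ← pow_two, hi]
      simp
      try abel
    · rw [← smul_add]
      have : v - i • T v + (v + i • T v) = (2 : E) • v := by
        rw [two_smul]; abel
      rw [this, smul_smul, inv_mul_cancel₀ htwo, one_smul]
  have hisc : IsCompl (LinearMap.ker (T - i • LinearMap.id))
      (LinearMap.ker (T + i • LinearMap.id)) := ⟨hdisj, hcodisj⟩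
  -- invariance
  have hinv1 : ∀ g : G, ∀ v ∈ LinearMap.ker (T - i • LinearMap.id),
      ρ g v ∈ LinearMap.ker (T - i • LinearMap.id) := by
    intro g v hv
    rw [hmemW] at hv ⊢
    have := LinearMap.ext_iff.mp (hcomm g) v
    simp only [LinearMap.comp_apply] at this
    rw [this, hv, map_smul]
  have hinv2 : ∀ g : G, ∀ v ∈ LinearMap.ker (T + i • LinearMap.id),
      ρ g v ∈ LinearMap.ker (T + i • LinearMap.id) := by
    intro g v hv
    rw [hmemW'] at hv ⊢
    have := LinearMap.ext_iff.mp (hcomm g) v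
    simp only [LinearMap.comp_apply] at this
    rw [this, hv, map_neg, map_smul]
  -- K injective
  have hKinj : Function.Injective K := by
    intro a b h
    have : -a = -b := by rw [← hK' a, ← hK' b, h]
    exact neg_injective this
  -- K maps W onto W'
  have hmap : Submodule.map K (LinearMap.ker (T - i • LinearMap.id))
      = LinearMap.ker (T + i • LinearMap.id) := by
    apply le_antisymm
    · rintro _ ⟨v, hv, rfl⟩
      simp only [SetLike.mem_coe] at hv
      rw [hmemW] at hv
      rw [hmemW', hKT, hv, map_smul]
    · intro w hw
      rw [hmemW'] at hw
      refine ⟨-(K w), ?_, by rw [map_neg, hK']; simp⟩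
      simp only [SetLike.mem_coe]
      rw [hmemW, map_neg, hKT, hw]
      simp
  -- finrank facts
  have hfd : FiniteDimensional E V := FiniteDimensional.of_finrank_eq_succ (n := 3) hdim
  have hsum : Module.finrank E (LinearMap.ker (T - i • LinearMap.id)) +
      Module.finrank E (LinearMap.ker (T + i • LinearMap.id)) = 4 := by
    rw [Submodule.finrank_add_eq_of_isCompl hisc, hdim]
  have heqrank : Module.finrank E (LinearMap.ker (T + i • LinearMap.id)) =
      Module.finrank E (LinearMap.ker (T - i • LinearMap.id)) := by
    rw [← hmap]
    exact (LinearEquiv.finrank_eq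
      (Submodule.equivMapOfInjective K hKinj _)).symm
  have hr1 : Module.finrank E (LinearMap.ker (T - i • LinearMap.id)) = 2 := by omega
  have hr2 : Module.finrank E (LinearMap.ker (T + i • LinearMap.id)) = 2 := by omega
  refine ⟨hcomm, hT2', hisc, hr1, hr2, hinv1, hinv2, hKinj, hmap, ?_, ?_⟩
  · intro g hg v _
    have := LinearMap.ext_iff.mp (hcK g hg) v
    simpa using this
  · intro g hg v _
    have := LinearMap.ext_iff.mp (haK g hg) v
    simpa using this
end

section
/- Let J, K, A : V → V be E-linear maps such that J ∘ J = -id, K is bijective, K ∘ J = -J ∘ K, and A commutes with both J and K. Then A preserves W₊ = ker(J - i·id) and W₋ = ker(J + i·id), the characteristic polynomial of A restricted to W₊ equals the characteristic polynomial of A restricted to W₋, and the characteristic polynomial of A on V is the square of the characteristic polynomial of A restricted to W₊. (Corollary 3.1.4(a1): at a prime splitting completely in the biquadratic field, the degree-4 characteristic polynomial is the square of a quadratic.) -/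
open LinearMap Module

set_option maxHeartbeats 1000000

/-- Corollary 3.1.4(a1): if `A` commutes with `J` and with a bijective `K`
anticommuting with `J`, then `A` preserves both `±i`-eigenspaces of `J`, the
characteristic polynomials of the two restrictions agree, and the characteristic
polynomial of `A` on `V` is the square of that quadratic. -/
theorem charpoly_square_of_commuting
    {E : Type*} [Field E] (htwo : (2 : E) ≠ 0) (i : E) (hi : i ^ 2 = -1)
    {V : Type*} [AddCommGroup V] [Module E V] [FiniteDimensional E V]
    (hdim : Module.finrank E V = 4)
    (J K A : V →ₗ[E] V)
    (hJ : J ∘ₗ J = -LinearMap.id) (hK : Function.Bijective K)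
    (hKJ : K ∘ₗ J = -(J ∘ₗ K))
    (hAJ : A ∘ₗ J = J ∘ₗ A) (hAK : A ∘ₗ K = K ∘ₗ A) :
    (∀ x ∈ LinearMap.ker (J - i • LinearMap.id),
      A x ∈ LinearMap.ker (J - i • LinearMap.id)) ∧
    (∀ x ∈ LinearMap.ker (J + i • LinearMap.id),
      A x ∈ LinearMap.ker (J + i • LinearMap.id)) ∧
    ∀ (hplus : ∀ x ∈ LinearMap.ker (J - i • LinearMap.id),
        A x ∈ LinearMap.ker (J - i • LinearMap.id))
      (hminus : ∀ x ∈ LinearMap.ker (J + i • LinearMap.id),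
        A x ∈ LinearMap.ker (J + i • LinearMap.id)),
      (A.restrict hplus).charpoly = (A.restrict hminus).charpoly ∧
      A.charpoly = (A.restrict hplus).charpoly ^ 2 := by
  have hi' : i * i = -1 := by rw [← sq]; exact hi
  have hine : i ≠ 0 := by
    intro h; rw [h, mul_zero] at hi'
    exact one_ne_zero (neg_eq_zero.mp hi'.symm)
  have hJJ : ∀ x : V, J (J x) = -x := fun x => by
    have := LinearMap.ext_iff.mp hJ x; simpa using this
  have hKJ' : ∀ x : V, K (J x) = -J (K x) := fun x => by
    have := LinearMap.ext_iff.mp hKJ x; simpa using this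
  have hAJ' : ∀ x : V, A (J x) = J (A x) := fun x => LinearMap.ext_iff.mp hAJ x
  have hAK' : ∀ x : V, A (K x) = K (A x) := fun x => LinearMap.ext_iff.mp hAK x
  set Wp := LinearMap.ker (J - i • LinearMap.id) with hWp
  set Wm := LinearMap.ker (J + i • LinearMap.id) with hWm
  have memWp : ∀ x : V, x ∈ Wp ↔ J x = i • x := by
    intro x
    simp [hWp, LinearMap.mem_ker, sub_eq_zero]
  have memWm : ∀ x : V, x ∈ Wm ↔ J x = -(i • x) := by
    intro x
    simp [hWm, LinearMap.mem_ker, add_eq_zero_iff_eq_neg]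
  have hplus : ∀ x ∈ Wp, A x ∈ Wp := by
    intro x hx
    rw [memWp] at hx ⊢
    rw [← hAJ', hx, map_smul]
  have hminus : ∀ x ∈ Wm, A x ∈ Wm := by
    intro x hx
    rw [memWm] at hx ⊢
    rw [← hAJ', hx, map_neg, map_smul]
  refine ⟨hplus, hminus, ?_⟩
  intro hp hm
  -- complementarity
  have hcompl : IsCompl Wp Wm := by
    constructor
    · rw [Submodule.disjoint_def]
      intro x hxp hxm
      rw [memWp] at hxp
      rw [memWm] at hxm
      have : (2 * i) • x = 0 := by
        rw [mul_smul, two_smul]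
        rw [hxp] at hxm
        nth_rewrite 1 [hxm]
        simp
      rcases smul_eq_zero.mp this with h | h
      · exact absurd h (mul_ne_zero htwo hine)
      · exact h
    · rw [codisjoint_iff, Submodule.eq_top_iff']
      intro x
      have h1 : (2⁻¹ : E) • (x - i • J x) ∈ Wp := by
        rw [memWp, map_smul, map_sub, map_smul, hJJ]
        rw [smul_comm i (2⁻¹ : E)]
        congr 1
        rw [smul_sub, smul_smul, hi', neg_smul, one_smul]
        module
      have h2 : (2⁻¹ : E) • (x + i • J x) ∈ Wm := by
        rw [memWm, map_smul, map_add, map_smul, hJJ]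
        rw [smul_comm i (2⁻¹ : E), ← smul_neg]
        congr 1
        rw [smul_add, smul_smul, hi', neg_smul, one_smul]
        module
      have hx : x = (2⁻¹ : E) • (x - i • J x) + (2⁻¹ : E) • (x + i • J x) := by
        rw [← smul_add]
        have h3 : x - i • J x + (x + i • J x) = (2 : E) • x := by
          rw [two_smul]; abel
        rw [h3, smul_smul, inv_mul_cancel₀ htwo, one_smul]
      rw [hx]
      exact Submodule.add_mem _ (Submodule.mem_sup_left h1) (Submodule.mem_sup_right h2)
  -- K maps Wp to Wm and back
  have hKpm : ∀ x ∈ Wp, K x ∈ Wm := by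
    intro x hx
    rw [memWp] at hx
    rw [memWm]
    have h := hKJ' x
    rw [hx, map_smul] at h
    exact neg_eq_iff_eq_neg.mp h.symm
  let Kl : Wp →ₗ[E] Wm := K.restrict hKpm
  have hKlbij : Function.Bijective Kl := by
    constructor
    · intro a b hab
      have h := Subtype.ext_iff.mp hab
      rw [LinearMap.restrict_coe_apply, LinearMap.restrict_coe_apply] at h
      exact Subtype.ext (hK.injective h)
    · rintro ⟨y, hy⟩
      obtain ⟨x, hx⟩ := hK.surjective y
      rw [memWm] at hy
      have hxWp : x ∈ Wp := by
        rw [memWp]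
        apply hK.injective
        rw [hKJ', hx, hy, neg_neg, map_smul, hx]
      refine ⟨⟨x, hxWp⟩, Subtype.ext ?_⟩
      rw [LinearMap.restrict_coe_apply]
      exact hx
  let eK : Wp ≃ₗ[E] Wm := LinearEquiv.ofBijective Kl hKlbij
  -- restrictions are conjugate via eK
  have hconj : eK.conj (A.restrict hp) = A.restrict hm := by
    ext x
    rw [LinearEquiv.conj_apply]
    simp only [LinearMap.comp_apply, LinearEquiv.coe_coe]
    obtain ⟨y, rfl⟩ := eK.surjective x
    rw [LinearEquiv.symm_apply_apply]
    have h1 : ((eK ((A.restrict hp) y)) : V) = K (A y) := by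
      show ((Kl ((A.restrict hp) y)) : V) = K (A y)
      rw [LinearMap.restrict_coe_apply, LinearMap.restrict_coe_apply]
    have h2 : ((A.restrict hm (eK y)) : V) = A (K y) := by
      show ((A.restrict hm (Kl y)) : V) = A (K y)
      rw [LinearMap.restrict_coe_apply, LinearMap.restrict_coe_apply]
    rw [h1, h2, hAK']
  have heq : (A.restrict hp).charpoly = (A.restrict hm).charpoly := by
    rw [← hconj, LinearEquiv.charpoly_conj]
  refine ⟨heq, ?_⟩
  -- decompose A as prodMap via the direct sum
  let e := Submodule.prodEquivOfIsCompl Wp Wm hcompl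
  have hA : e.conj ((A.restrict hp).prodMap (A.restrict hm)) = A := by
    ext x
    rw [LinearEquiv.conj_apply]
    simp only [LinearMap.comp_apply, LinearEquiv.coe_coe]
    obtain ⟨pq, rfl⟩ := e.surjective x
    rw [LinearEquiv.symm_apply_apply]
    have he : ∀ z : Wp × Wm, e z = (z.1 : V) + (z.2 : V) := fun z =>
      Submodule.coe_prodEquivOfIsCompl' _ _ hcompl z
    rw [he, he, LinearMap.prodMap_apply, map_add]
    simp only [LinearMap.restrict_coe_apply]
  calc A.charpoly = (e.conj ((A.restrict hp).prodMap (A.restrict hm))).charpoly := by rw [hA]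
    _ = ((A.restrict hp).prodMap (A.restrict hm)).charpoly := LinearEquiv.charpoly_conj e _
    _ = (A.restrict hp).charpoly * (A.restrict hm).charpoly := LinearMap.charpoly_prodMap _ _
    _ = (A.restrict hp).charpoly ^ 2 := by rw [← heq, sq]
end

section
/- Let J, A : V → V be E-linear maps with J ∘ J = -id, A bijective, and A ∘ J = -J ∘ A. Then A maps W₊ = ker(J - i·id) into W₋ = ker(J + i·id) and W₋ into W₊, the composite A ∘ A preserves W₊, and the characteristic polynomial of A on V equals q composed with X², where q is the characteristic polynomial of A ∘ A restricted to W₊. (Corollary 3.1.4(a3): at an inert prime, H_p(x) = H_{𝔭,u}(x²).) -/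
open LinearMap Module Polynomial

set_option maxHeartbeats 1000000

theorem my_det_fin_four {R : Type*} [CommRing R] (A : Matrix (Fin 4) (Fin 4) R) :
    Matrix.det A =
      A 0 0 * (A 1 1 * (A 2 2 * A 3 3 - A 2 3 * A 3 2) - A 1 2 * (A 2 1 * A 3 3 - A 2 3 * A 3 1)
        + A 1 3 * (A 2 1 * A 3 2 - A 2 2 * A 3 1))
      - A 0 1 * (A 1 0 * (A 2 2 * A 3 3 - A 2 3 * A 3 2) - A 1 2 * (A 2 0 * A 3 3 - A 2 3 * A 3 0)
        + A 1 3 * (A 2 0 * A 3 2 - A 2 2 * A 3 0))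
      + A 0 2 * (A 1 0 * (A 2 1 * A 3 3 - A 2 3 * A 3 1) - A 1 1 * (A 2 0 * A 3 3 - A 2 3 * A 3 0)
        + A 1 3 * (A 2 0 * A 3 1 - A 2 1 * A 3 0))
      - A 0 3 * (A 1 0 * (A 2 1 * A 3 2 - A 2 2 * A 3 1) - A 1 1 * (A 2 0 * A 3 2 - A 2 2 * A 3 0)
        + A 1 2 * (A 2 0 * A 3 1 - A 2 1 * A 3 0)) := by
  rw [Matrix.det_succ_row_zero]
  simp [Fin.sum_univ_succ, Matrix.det_fin_three]
  norm_num [Fin.succAbove, Fin.lt_def, Fin.succ, Fin.castSucc, Fin.castAdd, Fin.castLE]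
  have h3 : ∀ (h : 3 < 4), (⟨3, h⟩ : Fin 4) = 3 := fun _ => rfl
  have h2 : ∀ (h : 2 < 4), (⟨2, h⟩ : Fin 4) = 2 := fun _ => rfl
  simp only [h3, h2]
  ring

theorem my_block_charpoly {R : Type*} [CommRing R] (B : Matrix (Fin 2) (Fin 2) R) :
    (!![(0:R), 0, B 0 0, B 0 1; 0, 0, B 1 0, B 1 1; 1, 0, 0, 0; 0, 1, 0, 0]).charpoly
      = B.charpoly.comp (Polynomial.X ^ 2) := by
  set M : Matrix (Fin 4) (Fin 4) R :=
    !![(0:R), 0, B 0 0, B 0 1; 0, 0, B 1 0, B 1 1; 1, 0, 0, 0; 0, 1, 0, 0] with hM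
  rw [Matrix.charpoly, Matrix.charpoly, my_det_fin_four, Matrix.det_fin_two]
  have c00 : Matrix.charmatrix M 0 0 = Polynomial.X - Polynomial.C (0:R) := Matrix.charmatrix_apply_eq M 0
  have c01 : Matrix.charmatrix M 0 1 = -Polynomial.C (0:R) := Matrix.charmatrix_apply_ne M 0 1 (by decide)
  have c02 : Matrix.charmatrix M 0 2 = -Polynomial.C (B 0 0) := Matrix.charmatrix_apply_ne M 0 2 (by decide)
  have c03 : Matrix.charmatrix M 0 3 = -Polynomial.C (B 0 1) := Matrix.charmatrix_apply_ne M 0 3 (by decide)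
  have c10 : Matrix.charmatrix M 1 0 = -Polynomial.C (0:R) := Matrix.charmatrix_apply_ne M 1 0 (by decide)
  have c11 : Matrix.charmatrix M 1 1 = Polynomial.X - Polynomial.C (0:R) := Matrix.charmatrix_apply_eq M 1
  have c12 : Matrix.charmatrix M 1 2 = -Polynomial.C (B 1 0) := Matrix.charmatrix_apply_ne M 1 2 (by decide)
  have c13 : Matrix.charmatrix M 1 3 = -Polynomial.C (B 1 1) := Matrix.charmatrix_apply_ne M 1 3 (by decide)
  have c20 : Matrix.charmatrix M 2 0 = -Polynomial.C (1:R) := Matrix.charmatrix_apply_ne M 2 0 (by decide)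
  have c21 : Matrix.charmatrix M 2 1 = -Polynomial.C (0:R) := Matrix.charmatrix_apply_ne M 2 1 (by decide)
  have c22 : Matrix.charmatrix M 2 2 = Polynomial.X - Polynomial.C (0:R) := Matrix.charmatrix_apply_eq M 2
  have c23 : Matrix.charmatrix M 2 3 = -Polynomial.C (0:R) := Matrix.charmatrix_apply_ne M 2 3 (by decide)
  have c30 : Matrix.charmatrix M 3 0 = -Polynomial.C (0:R) := Matrix.charmatrix_apply_ne M 3 0 (by decide)
  have c31 : Matrix.charmatrix M 3 1 = -Polynomial.C (1:R) := Matrix.charmatrix_apply_ne M 3 1 (by decide)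
  have c32 : Matrix.charmatrix M 3 2 = -Polynomial.C (0:R) := Matrix.charmatrix_apply_ne M 3 2 (by decide)
  have c33 : Matrix.charmatrix M 3 3 = Polynomial.X - Polynomial.C (0:R) := Matrix.charmatrix_apply_eq M 3
  rw [c00, c01, c02, c03, c10, c11, c12, c13, c20, c21, c22, c23, c30, c31, c32, c33]
  rw [Matrix.charmatrix_apply_eq, Matrix.charmatrix_apply_eq,
    Matrix.charmatrix_apply_ne B 0 1 (by decide), Matrix.charmatrix_apply_ne B 1 0 (by decide)]
  simp only [Polynomial.sub_comp, Polynomial.mul_comp, Polynomial.X_comp, Polynomial.C_comp,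
    Polynomial.neg_comp, map_zero, map_one]
  ring

/-- Corollary 3.1.4(a3): if a bijective `A` anticommutes with `J`, then `A` swaps the
`±i`-eigenspaces of `J`, `A ∘ A` preserves the `+i`-eigenspace, and the characteristic
polynomial of `A` on `V` is `q(X²)` where `q` is the characteristic polynomial of
`A ∘ A` restricted to the `+i`-eigenspace. -/
theorem charpoly_comp_X_sq_of_anticommuting
    {E : Type*} [Field E] (htwo : (2 : E) ≠ 0) (i : E) (hi : i ^ 2 = -1)
    {V : Type*} [AddCommGroup V] [Module E V] [FiniteDimensional E V]
    (hdim : Module.finrank E V = 4)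
    (J A : V →ₗ[E] V)
    (hJ : J ∘ₗ J = -LinearMap.id) (hA : Function.Bijective A)
    (hAJ : A ∘ₗ J = -(J ∘ₗ A)) :
    (∀ x ∈ LinearMap.ker (J - i • LinearMap.id),
      A x ∈ LinearMap.ker (J + i • LinearMap.id)) ∧
    (∀ x ∈ LinearMap.ker (J + i • LinearMap.id),
      A x ∈ LinearMap.ker (J - i • LinearMap.id)) ∧
    (∀ x ∈ LinearMap.ker (J - i • LinearMap.id),
      (A ∘ₗ A) x ∈ LinearMap.ker (J - i • LinearMap.id)) ∧
    ∀ (h : ∀ x ∈ LinearMap.ker (J - i • LinearMap.id),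
        (A ∘ₗ A) x ∈ LinearMap.ker (J - i • LinearMap.id)),
      A.charpoly = (((A ∘ₗ A).restrict h).charpoly).comp (Polynomial.X ^ 2) := by
  have hi0 : i ≠ 0 := by
    intro h; rw [h] at hi; simp at hi
  have hJJ : ∀ x : V, J (J x) = -x := fun x => by
    have := congrArg (fun f : V →ₗ[E] V => f x) hJ
    simpa using this
  have hAJ' : ∀ x : V, A (J x) = -(J (A x)) := fun x => by
    have := congrArg (fun f : V →ₗ[E] V => f x) hAJ
    simpa using this
  have memp : ∀ x : V, x ∈ LinearMap.ker (J - i • LinearMap.id) ↔ J x = i • x := by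
    intro x
    simp [LinearMap.mem_ker, sub_eq_zero]
  have memm : ∀ x : V, x ∈ LinearMap.ker (J + i • LinearMap.id) ↔ J x = -(i • x) := by
    intro x
    simp [LinearMap.mem_ker, add_eq_zero_iff_eq_neg]
  have swap1 : ∀ x ∈ LinearMap.ker (J - i • LinearMap.id),
      A x ∈ LinearMap.ker (J + i • LinearMap.id) := by
    intro x hx
    rw [memp] at hx
    rw [memm]
    have := hAJ' x
    rw [hx, map_smul] at this
    have : J (A x) = -(i • A x) := by
      have h2 := this.symm
      rw [← neg_eq_iff_eq_neg]
      exact h2.symm ▸ rfl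
    exact this
  have swap2 : ∀ x ∈ LinearMap.ker (J + i • LinearMap.id),
      A x ∈ LinearMap.ker (J - i • LinearMap.id) := by
    intro x hx
    rw [memm] at hx
    rw [memp]
    have h1 := hAJ' x
    rw [hx] at h1
    -- A (-(i • x)) = -(J (A x))
    rw [map_neg, map_smul] at h1
    have := neg_injective h1
    exact this.symm
  have sq : ∀ x ∈ LinearMap.ker (J - i • LinearMap.id),
      (A ∘ₗ A) x ∈ LinearMap.ker (J - i • LinearMap.id) := by
    intro x hx
    exact swap2 _ (swap1 _ hx)
  refine ⟨swap1, swap2, sq, ?_⟩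
  intro h
  set Wp := LinearMap.ker (J - i • LinearMap.id) with hWpdef
  set Wm := LinearMap.ker (J + i • LinearMap.id) with hWmdef
  -- disjointness
  have hinf : Wp ⊓ Wm = ⊥ := by
    rw [eq_bot_iff]
    intro x hx
    rw [Submodule.mem_inf] at hx
    obtain ⟨hxp, hxm⟩ := hx
    rw [memp] at hxp
    rw [memm] at hxm
    have heq : i • x = -(i • x) := hxp.symm.trans hxm
    have h2 : (2 * i) • x = 0 := by
      rw [mul_smul, two_smul, add_eq_zero_iff_eq_neg]
      exact heq
    have hx0 : x = 0 := by
      rcases smul_eq_zero.mp h2 with h | h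
      · exact absurd h (mul_ne_zero htwo hi0)
      · exact h
    simp [hx0]
  -- spanning
  have hsup : Wp ⊔ Wm = ⊤ := by
    rw [eq_top_iff]
    intro x _
    have hi2 : i * i = -1 := by rw [← hi]; ring
    have hxp : (2:E)⁻¹ • (x - i • J x) ∈ Wp := by
      rw [memp, map_smul, map_sub, map_smul, hJJ]
      match_scalars
      · linear_combination (2:E)⁻¹ * hi2
      · ring
    have hxm : (2:E)⁻¹ • (x + i • J x) ∈ Wm := by
      rw [memm, map_smul, map_add, map_smul, hJJ]
      match_scalars
      · linear_combination (2:E)⁻¹ * hi2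
      · ring
    have : x = (2:E)⁻¹ • (x - i • J x) + (2:E)⁻¹ • (x + i • J x) := by
      rw [← smul_add]
      have : x - i • J x + (x + i • J x) = (2:E) • x := by
        rw [two_smul]; abel
      rw [this, smul_smul, inv_mul_cancel₀ htwo, one_smul]
    rw [this]
    exact Submodule.add_mem_sup hxp hxm
  -- finranks
  have hApm : Function.Injective (A.restrict swap1) := by
    intro x y hxy
    have : A (x : V) = A (y : V) := by
      have := congrArg (Subtype.val) hxy
      simpa [LinearMap.restrict_coe_apply] using this
    exact Subtype.ext (hA.injective this)
  have hAmp : Function.Injective (A.restrict swap2) := by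
    intro x y hxy
    have : A (x : V) = A (y : V) := by
      have := congrArg (Subtype.val) hxy
      simpa [LinearMap.restrict_coe_apply] using this
    exact Subtype.ext (hA.injective this)
  have hrankeq : finrank E Wp = finrank E Wm :=
    le_antisymm (LinearMap.finrank_le_finrank_of_injective hApm)
      (LinearMap.finrank_le_finrank_of_injective hAmp)
  have hranksum : finrank E Wp + finrank E Wm = 4 := by
    have := Submodule.finrank_sup_add_finrank_inf_eq Wp Wm
    rw [hinf, hsup] at this
    simp [finrank_top, hdim] at this
    omega
  have hWp2 : finrank E Wp = 2 := by omega
  -- basis of Wp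
  let e : Basis (Fin 2) E Wp := Module.finBasisOfFinrankEq E Wp hWp2
  -- the family
  let v : Fin 4 → V := ![(e 0 : V), (e 1 : V), A (e 0 : V), A (e 1 : V)]
  have hepair : ∀ g0 g1 : E, g0 • (e 0 : V) + g1 • (e 1 : V) = 0 → g0 = 0 ∧ g1 = 0 := by
    intro g0 g1 hg
    have hsub : (g0 • e 0 + g1 • e 1 : Wp) = 0 := by
      apply Subtype.ext
      simpa using hg
    have hli := Fintype.linearIndependent_iff.mp e.linearIndependent ![g0, g1] (by
      rw [Fin.sum_univ_two]
      simpa using hsub)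
    exact ⟨hli 0, hli 1⟩
  have hv : LinearIndependent E v := by
    rw [Fintype.linearIndependent_iff]
    intro g hg
    rw [Fin.sum_univ_four] at hg
    have hv0 : v 0 = (e 0 : V) := rfl
    have hv1 : v 1 = (e 1 : V) := rfl
    have hv2 : v 2 = A (e 0 : V) := rfl
    have hv3 : v 3 = A (e 1 : V) := rfl
    rw [hv0, hv1, hv2, hv3] at hg
    set x := g 0 • (e 0 : V) + g 1 • (e 1 : V) with hxdef
    set y := g 2 • A (e 0 : V) + g 3 • A (e 1 : V) with hydef
    have hxWp : x ∈ Wp := Submodule.add_mem _ (Submodule.smul_mem _ _ (e 0).2)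
      (Submodule.smul_mem _ _ (e 1).2)
    have hyeq : y = A (g 2 • (e 0 : V) + g 3 • (e 1 : V)) := by
      rw [map_add, map_smul, map_smul]
    have hyWm : y ∈ Wm := by
      rw [hyeq]
      exact swap1 _ (Submodule.add_mem _ (Submodule.smul_mem _ _ (e 0).2)
        (Submodule.smul_mem _ _ (e 1).2))
    have hxy : x + y = 0 := by rw [hxdef, hydef, ← add_assoc]; exact hg
    have hxWm : x ∈ Wm := by
      have : x = -y := by rw [eq_neg_iff_add_eq_zero]; exact hxy
      rw [this]
      exact Submodule.neg_mem _ hyWm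
    have hx0 : x = 0 := by
      have : x ∈ Wp ⊓ Wm := ⟨hxWp, hxWm⟩
      rw [hinf] at this
      simpa using this
    have hy0 : y = 0 := by
      rw [← hxy, hx0, zero_add]
    have h01 := hepair (g 0) (g 1) hx0
    have h23 : g 2 = 0 ∧ g 3 = 0 := by
      apply hepair
      apply hA.injective
      rw [← hyeq, hy0, map_zero]
    intro j
    fin_cases j
    · exact h01.1
    · exact h01.2
    · exact h23.1
    · exact h23.2
  have hcard : Fintype.card (Fin 4) = finrank E V := by simp [hdim]
  let b : Basis (Fin 4) E V := basisOfLinearIndependentOfCardEqFinrank hv hcard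
  have hb : ⇑b = v := coe_basisOfLinearIndependentOfCardEqFinrank hv hcard
  set R := (A ∘ₗ A).restrict h with hRdef
  set B := LinearMap.toMatrix e e R with hBdef
  set M : Matrix (Fin 4) (Fin 4) E :=
    !![0, 0, B 0 0, B 0 1; 0, 0, B 1 0, B 1 1; 1, 0, 0, 0; 0, 1, 0, 0] with hMdef
  have hres : ∀ k : Fin 2, A (A (e k : V)) = B 0 k • (e 0 : V) + B 1 k • (e 1 : V) := by
    intro k
    have h1 : R (e k) = B 0 k • e 0 + B 1 k • e 1 := by
      have h2 : Matrix.toLin e e B (e k) = ∑ j : Fin 2, B j k • e j := Matrix.toLin_self e e B k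
      rw [hBdef, Matrix.toLin_toMatrix] at h2
      rw [h2, Fin.sum_univ_two]
    have h3 := congrArg (Subtype.val) h1
    rw [LinearMap.restrict_coe_apply] at h3
    simpa using h3
  have hAtoLin : A = Matrix.toLin b b M := by
    apply b.ext
    intro j
    rw [Matrix.toLin_self]
    rw [Fin.sum_univ_four]
    have hM00 : M 0 0 = (0:E) := rfl
    have hM01 : M 0 1 = (0:E) := rfl
    have hM02 : M 0 2 = B 0 0 := rfl
    have hM03 : M 0 3 = B 0 1 := rfl
    have hM10 : M 1 0 = (0:E) := rfl
    have hM11 : M 1 1 = (0:E) := rfl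
    have hM12 : M 1 2 = B 1 0 := rfl
    have hM13 : M 1 3 = B 1 1 := rfl
    have hM20 : M 2 0 = (1:E) := rfl
    have hM21 : M 2 1 = (0:E) := rfl
    have hM22 : M 2 2 = (0:E) := rfl
    have hM23 : M 2 3 = (0:E) := rfl
    have hM30 : M 3 0 = (0:E) := rfl
    have hM31 : M 3 1 = (1:E) := rfl
    have hM32 : M 3 2 = (0:E) := rfl
    have hM33 : M 3 3 = (0:E) := rfl
    fin_cases j <;>
      simp [hb, v, hres 0, hres 1, hM00, hM01, hM02, hM03, hM10, hM11, hM12, hM13,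
        hM20, hM21, hM22, hM23, hM30, hM31, hM32, hM33]
  have hAM : LinearMap.toMatrix b b A = M := by
    rw [hAtoLin, LinearMap.toMatrix_toLin]
  have hchA : A.charpoly = M.charpoly := by
    rw [← LinearMap.charpoly_toMatrix A b, hAM]
  have hchR : R.charpoly = B.charpoly := by
    rw [← LinearMap.charpoly_toMatrix R e, hBdef]
  rw [hchA, hchR]
  exact my_block_charpoly B
end

section
/- For every g ∈ H_s with g ∉ H_t, the characteristic polynomial of ρ(g) on V is the product of the characteristic polynomial of ρ(g) restricted to W₊ and the characteristic polynomial of ρ(g) restricted to W₋; moreover, if the characteristic polynomial of ρ(g) restricted to W₊ is X² - A·X + B, then the characteristic polynomial of ρ(g) restricted to W₋ is X² + A·X + B. (Corollary 3.1.4(a2): at a prime split in Q(√u) but not in the biquadratic field, H_p(x) = (x² - A_u(p)x + B_u(p))(x² + A_u(p)x + B_u(p)).) -/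
open LinearMap Module Polynomial

set_option maxHeartbeats 1000000
set_option synthInstance.maxHeartbeats 400000

/-- Charpoly of an endomorphism preserving two complementary submodules is the product of
the charpolys of the restrictions. -/
private lemma aux_charpoly_eq_mul_of_isCompl {E V : Type*} [Field E] [AddCommGroup V]
    [Module E V] [FiniteDimensional E V] (f : V →ₗ[E] V) {p q : Submodule E V}
    (hc : IsCompl p q) (hp : ∀ x ∈ p, f x ∈ p) (hq : ∀ x ∈ q, f x ∈ q) :
    f.charpoly = (f.restrict hp).charpoly * (f.restrict hq).charpoly := by
  let e := Submodule.prodEquivOfIsCompl p q hc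
  have hconj : e.conj ((f.restrict hp).prodMap (f.restrict hq)) = f := by
    apply LinearMap.ext
    intro x
    obtain ⟨y, rfl⟩ := e.surjective x
    rw [LinearEquiv.conj_apply_apply, LinearEquiv.symm_apply_apply]
    obtain ⟨a, b⟩ := y
    show e (f.restrict hp a, f.restrict hq b) = f (e (a, b))
    simp only [e, Submodule.coe_prodEquivOfIsCompl', map_add]
    rw [LinearMap.restrict_coe_apply, LinearMap.restrict_coe_apply]
  have h := LinearEquiv.charpoly_conj e ((f.restrict hp).prodMap (f.restrict hq))
  rw [hconj] at h
  rw [h, LinearMap.charpoly_prodMap]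

private lemma aux_charpoly_fin_two {E : Type*} [Field E] (M : Matrix (Fin 2) (Fin 2) E) :
    M.charpoly = X ^ 2 - C M.trace * X + C M.det := by
  rw [Matrix.charpoly, Matrix.det_fin_two, Matrix.trace_fin_two, Matrix.det_fin_two]
  rw [Matrix.charmatrix_apply_eq, Matrix.charmatrix_apply_eq,
    Matrix.charmatrix_apply_ne _ _ _ (by decide : (0 : Fin 2) ≠ 1),
    Matrix.charmatrix_apply_ne _ _ _ (by decide : (1 : Fin 2) ≠ 0)]
  simp only [map_add, map_mul, map_sub]
  ring

/-- Corollary 3.1.4(a2): for `g ∈ H_s \ H_t`, the characteristic polynomial of `ρ(g)`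
on `V` is the product of its characteristic polynomials on the two eigenspaces of
`J_s`, and if the one on `W₊` is `X² - A·X + B` then the one on `W₋` is
`X² + A·X + B`. -/
theorem charpoly_factorization_split_not_in_biquadratic
    {E : Type*} [Field E] (htwo : (2 : E) ≠ 0) (i : E) (hi : i ^ 2 = -1)
    {V : Type*} [AddCommGroup V] [Module E V] [FiniteDimensional E V]
    (hdim : Module.finrank E V = 4)
    {G : Type*} [Group G] (ρ : Representation E G V)
    (Hs Ht : Subgroup G) (hne : Hs ≠ Ht) (hHs : Hs ≠ ⊤) (hHt : Ht ≠ ⊤)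
    (Js Jt : V →ₗ[E] V)
    (hJs : Js ∘ₗ Js = -LinearMap.id) (hJt : Jt ∘ₗ Jt = -LinearMap.id)
    (hanticomm : Js ∘ₗ Jt = -(Jt ∘ₗ Js))
    (hcs : ∀ g ∈ Hs, Js ∘ₗ ρ g = ρ g ∘ₗ Js)
    (has : ∀ g ∉ Hs, Js ∘ₗ ρ g = -(ρ g ∘ₗ Js))
    (hct : ∀ g ∈ Ht, Jt ∘ₗ ρ g = ρ g ∘ₗ Jt)
    (hat : ∀ g ∉ Ht, Jt ∘ₗ ρ g = -(ρ g ∘ₗ Jt)) :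
    ∀ g ∈ Hs, g ∉ Ht →
      (∀ x ∈ LinearMap.ker (Js - i • LinearMap.id),
        ρ g x ∈ LinearMap.ker (Js - i • LinearMap.id)) ∧
      (∀ x ∈ LinearMap.ker (Js + i • LinearMap.id),
        ρ g x ∈ LinearMap.ker (Js + i • LinearMap.id)) ∧
      ∀ (hplus : ∀ x ∈ LinearMap.ker (Js - i • LinearMap.id),
          ρ g x ∈ LinearMap.ker (Js - i • LinearMap.id))
        (hminus : ∀ x ∈ LinearMap.ker (Js + i • LinearMap.id),
          ρ g x ∈ LinearMap.ker (Js + i • LinearMap.id)),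
        (ρ g).charpoly
          = ((ρ g).restrict hplus).charpoly * ((ρ g).restrict hminus).charpoly ∧
        ∀ A B : E,
          ((ρ g).restrict hplus).charpoly
            = Polynomial.X ^ 2 - Polynomial.C A * Polynomial.X + Polynomial.C B →
          ((ρ g).restrict hminus).charpoly
            = Polynomial.X ^ 2 + Polynomial.C A * Polynomial.X + Polynomial.C B := by
  intro g hg hgt
  have hii : i * i = -1 := by rw [← sq]; exact hi
  have hine : i ≠ 0 := by intro h; rw [h] at hi; simp at hi
  have hJs' : ∀ x, Js (Js x) = -x := fun x => by
    have := LinearMap.congr_fun hJs x; simpa using this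
  have hJt' : ∀ x, Jt (Jt x) = -x := fun x => by
    have := LinearMap.congr_fun hJt x; simpa using this
  have hanti' : ∀ x, Js (Jt x) = -Jt (Js x) := fun x => by
    have := LinearMap.congr_fun hanticomm x; simpa using this
  have hcomm : ∀ x, Js (ρ g x) = ρ g (Js x) := fun x => by
    have := LinearMap.congr_fun (hcs g hg) x; simpa using this
  have hJtg : ∀ x, Jt (ρ g x) = -ρ g (Jt x) := fun x => by
    have := LinearMap.congr_fun (hat g hgt) x; simpa using this
  set p := LinearMap.ker (Js - i • LinearMap.id) with hp_def
  set q := LinearMap.ker (Js + i • LinearMap.id) with hq_def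
  have hmemp : ∀ x, x ∈ p ↔ Js x = i • x := fun x => by
    simp [hp_def, LinearMap.mem_ker, sub_eq_zero]
  have hmemq : ∀ x, x ∈ q ↔ Js x = -(i • x) := fun x => by
    simp [hq_def, LinearMap.mem_ker, add_eq_zero_iff_eq_neg]
  have hplus : ∀ x ∈ p, ρ g x ∈ p := by
    intro x hx
    rw [hmemp] at hx ⊢
    rw [hcomm, hx, map_smul]
  have hminus : ∀ x ∈ q, ρ g x ∈ q := by
    intro x hx
    rw [hmemq] at hx ⊢
    rw [hcomm, hx, map_neg, map_smul]
  refine ⟨hplus, hminus, ?_⟩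
  intro hplus' hminus'
  -- complementarity
  have hc : IsCompl p q := by
    constructor
    · rw [disjoint_iff_inf_le]
      rintro x hx
      obtain ⟨hx1, hx2⟩ := Submodule.mem_inf.mp hx
      rw [hmemp] at hx1
      rw [hmemq] at hx2
      have hsum : i • x + i • x = 0 :=
        eq_neg_iff_add_eq_zero.mp (hx1.symm.trans hx2)
      have h2 : (2 * i) • x = 0 := by
        rw [two_mul, add_smul]; exact hsum
      have h2i : (2 : E) * i ≠ 0 := mul_ne_zero htwo hine
      have := (smul_eq_zero.mp h2).resolve_left h2i
      simpa using this
    · rw [codisjoint_iff, eq_top_iff]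
      intro x _
      have h1p : Js (x - i • Js x) = Js x + i • x := by
        rw [map_sub, map_smul, hJs', smul_neg, sub_neg_eq_add]
      have h2p : i • (x - i • Js x) = Js x + i • x := by
        rw [smul_sub, smul_smul, hii, neg_one_smul, sub_neg_eq_add, add_comm]
      have h1q : Js (x + i • Js x) = Js x - i • x := by
        rw [map_add, map_smul, hJs', smul_neg, ← sub_eq_add_neg]
      have h2q : -(i • (x + i • Js x)) = Js x - i • x := by
        rw [smul_add, smul_smul, hii, neg_one_smul, neg_add, neg_neg, add_comm,
          ← sub_eq_add_neg]
      have hxp : (2 : E)⁻¹ • (x - i • Js x) ∈ p := by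
        rw [hmemp, map_smul, h1p, smul_comm i ((2 : E)⁻¹), h2p]
      have hxq : (2 : E)⁻¹ • (x + i • Js x) ∈ q := by
        rw [hmemq, map_smul, h1q, smul_comm i ((2 : E)⁻¹), ← smul_neg, h2q]
      refine Submodule.mem_sup.mpr ⟨_, hxp, _, hxq, ?_⟩
      rw [← smul_add]
      have : (x - i • Js x) + (x + i • Js x) = (2 : E) • x := by
        rw [two_smul]; abel
      rw [this, smul_smul, inv_mul_cancel₀ htwo, one_smul]
  refine ⟨aux_charpoly_eq_mul_of_isCompl (ρ g) hc hplus' hminus', ?_⟩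
  -- second part
  intro A B hAB
  have hnd : ((ρ g).restrict hplus').charpoly.natDegree = 2 := by
    rw [hAB]; compute_degree!
  have hrank : finrank E p = 2 :=
    (LinearMap.charpoly_natDegree ((ρ g).restrict hplus')).symm.trans hnd
  -- the equivalence p ≃ q given by Jt
  have hJtpq : ∀ x ∈ p, Jt x ∈ q := by
    intro x hx
    rw [hmemp] at hx
    rw [hmemq, hanti', hx, map_smul]
  have hJtqp : ∀ x ∈ q, (-Jt) x ∈ p := by
    intro x hx
    rw [hmemq] at hx
    rw [hmemp]
    simp only [LinearMap.neg_apply, map_neg, hanti', hx, neg_neg, map_smul, smul_neg]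
  let e : p ≃ₗ[E] q := LinearEquiv.ofLinear (Jt.restrict hJtpq) ((-Jt).restrict hJtqp)
    (by
      apply LinearMap.ext
      intro x
      apply Subtype.ext
      simp only [LinearMap.coe_comp, Function.comp_apply, LinearMap.restrict_coe_apply,
        LinearMap.neg_apply, map_neg, hJt', neg_neg, LinearMap.id_coe, id_eq])
    (by
      apply LinearMap.ext
      intro x
      apply Subtype.ext
      simp only [LinearMap.coe_comp, Function.comp_apply, LinearMap.restrict_coe_apply,
        LinearMap.neg_apply, map_neg, hJt', neg_neg, LinearMap.id_coe, id_eq])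
  have hconj : (ρ g).restrict hminus' = e.conj (-((ρ g).restrict hplus')) := by
    apply LinearMap.ext
    intro y
    apply Subtype.ext
    rw [LinearEquiv.conj_apply_apply]
    show (ρ g) (y : V) = _
    simp only [e, LinearEquiv.ofLinear_symm_apply, LinearEquiv.ofLinear_apply,
      LinearMap.neg_apply, LinearMap.restrict_coe_apply, NegMemClass.coe_neg,
      LinearMap.restrict_apply]
    simp only [map_neg, neg_neg, hJtg, hJt']
  have hcp : ((ρ g).restrict hminus').charpoly = (-((ρ g).restrict hplus')).charpoly := by
    rw [hconj, LinearEquiv.charpoly_conj]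
  let b : Basis (Fin 2) E p := Module.finBasisOfFinrankEq E p hrank
  set N := LinearMap.toMatrix b b ((ρ g).restrict hplus') with hNdef
  have hN : N.charpoly = X ^ 2 - C A * X + C B := by
    rw [hNdef, LinearMap.charpoly_toMatrix]; exact hAB
  rw [aux_charpoly_fin_two] at hN
  have h0 := congrArg (fun P => Polynomial.coeff P 0) hN
  have h1 := congrArg (fun P => Polynomial.coeff P 1) hN
  norm_num [coeff_X_pow] at h0 h1
  have hmat : LinearMap.toMatrix b b (-((ρ g).restrict hplus')) = -N := by
    rw [hNdef]; exact map_neg _ _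
  rw [hcp, ← LinearMap.charpoly_toMatrix (-((ρ g).restrict hplus')) b, hmat,
    aux_charpoly_fin_two, Matrix.trace_neg, Matrix.det_neg, Fintype.card_fin,
    h0, h1, neg_one_sq, one_mul, map_neg]
  ring
end

section
/- Suppose c ∈ G satisfies ρ(c) ∘ ρ(c) = id and the trace of ρ(c) on V equals 0. Then the trace of ρ(c) ⊗ 1 restricted to ker((J∘K)⊗1 - j·id) ⊆ V ⊗_F E is 0, and likewise the trace of ρ(c) ⊗ 1 restricted to ker((J∘K)⊗1 + j·id) is 0. (Proposition 3.1.5(c) and its concluding assertion: in the quadratic case, if Tr ρ(c) = 0 at the complex conjugation then the 2-dimensional constituent σ is odd.) -/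
/-!
Put `T = J ∘ K` and `A = ρ(c)`. Whether or not `c ∈ N`, `A` commutes with `T`, and `T² = -1`
because `J` and `K` anticommute. On the `j`-eigenspace `W` of `T ⊗ 1` the projection
`½ (1 - j T)` shows `tr(A|W) = ½ (tr A - j · tr(A T)) = -½ j · tr(A T)` with `tr(A T) ∈ F`.
But `A|W` is an involution, so its trace is an integer, hence lies in `F`; since `j ∉ F`
this forces `tr(A T) = 0`, and so `tr(A|W) = 0`. The same applies to `-j`.
-/

open LinearMap Module TensorProduct

theorem commute_mul_of_anticommute {R : Type*} [Ring R] {a b x : R}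
    (ha : a * x = -(x * a)) (hb : b * x = -(x * b)) : Commute (a * b) x := by
  calc a * b * x = a * (b * x) := mul_assoc a b x
    _ = x * a * b := by rw [hb, mul_neg, ← mul_assoc, ha, neg_mul, neg_neg]
    _ = x * (a * b) := mul_assoc x a b

theorem mul_mul_self_eq_neg_one_of_anticommute {R : Type*} [Ring R] {a b : R}
    (ha : a * a = -1) (hb : b * b = -1) (hab : a * b = -(b * a)) : a * b * (a * b) = -1 := by
  calc a * b * (a * b) = a * (b * a) * b := by simp only [mul_assoc]
    _ = -(a * a * (b * b)) := by
      rw [← neg_neg (b * a), ← hab]; simp only [mul_neg, neg_mul, mul_assoc]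
    _ = -1 := by rw [ha, hb]; simp

namespace LinearMap

theorem mapsTo_ker_sub_smul_of_commute {R M : Type*} [CommRing R] [AddCommGroup M] [Module R M]
    {f g : Module.End R M} (h : Commute f g) (s : R) :
    ∀ x ∈ ker (g - s • LinearMap.id), f x ∈ ker (g - s • LinearMap.id) := by
  intro x hx
  rw [mem_ker, sub_apply, smul_apply, id_apply, sub_eq_zero] at hx ⊢
  rw [← Module.End.mul_apply, ← h.eq, Module.End.mul_apply, hx, map_smul]

variable {K M : Type*} [Field K] [AddCommGroup M] [Module K M] [FiniteDimensional K M]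

theorem exists_trace_eq_intCast_of_mul_self_eq_one (h2 : (2 : K) ≠ 0) {B : Module.End K M}
    (hB : B * B = 1) : ∃ n : ℤ, trace K M B = n := by
  set P : Module.End K M := (2 : K)⁻¹ • (1 + B)
  have hP : IsIdempotentElem P := by
    have hsq : (1 + B) * (1 + B) = (2 : K) • (1 + B) := by
      simp only [two_smul, mul_add, add_mul, hB, mul_one, one_mul]
      abel
    rw [IsIdempotentElem, smul_mul_smul, hsq, smul_smul, inv_mul_cancel_right₀ h2]
  have hBP : B = (2 : K) • P - 1 := by
    simp only [P, smul_smul, mul_inv_cancel₀ h2, one_smul]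
    abel
  refine ⟨2 * finrank K (range P) - finrank K M, ?_⟩
  rw [hBP, map_sub, map_smul, hP.isProj_range.trace, Module.End.one_eq_id, trace_id]
  push_cast
  ring

theorem trace_restrict_eq_trace_comp_of_isProj {W : Submodule K M} {A P : Module.End K M}
    (hP : IsProj W P) (hA : ∀ x ∈ W, A x ∈ W) :
    trace K W (A.restrict hA) = trace K M (A ∘ₗ P) := by
  have hres : A.restrict hA = P.codRestrict W hP.map_mem ∘ₗ A ∘ₗ W.subtype := by
    ext x
    exact (hP.map_id _ (hA x x.2)).symm
  rw [hres, trace_comp_comm', comp_assoc, subtype_comp_codRestrict]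

theorem trace_restrict_ker_sub_smul_of_mul_self_eq_neg_one {T A : Module.End K M} {j : K}
    (h2 : (2 : K) ≠ 0) (hj : j ^ 2 = -1) (hT : T * T = -1)
    (hA : ∀ x ∈ ker (T - j • LinearMap.id), A x ∈ ker (T - j • LinearMap.id)) :
    trace K _ (A.restrict hA) = 2⁻¹ * (trace K M A - j * trace K M (A * T)) := by
  set P : Module.End K M := (2 : K)⁻¹ • (1 - j • T)
  have hTx : ∀ x, T (T x) = -x := fun x => by
    rw [← Module.End.mul_apply, hT]; rfl
  have hP : IsProj (ker (T - j • LinearMap.id)) P := by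
    constructor
    · intro x
      simp only [mem_ker, sub_apply, smul_apply, id_apply, P, Module.End.one_apply, map_smul,
        map_sub, hTx]
      match_scalars
      · linear_combination (2⁻¹ : K) * hj
      · ring
    · intro x hx
      rw [mem_ker, sub_apply, smul_apply, id_apply, sub_eq_zero] at hx
      simp only [P, sub_apply, smul_apply, Module.End.one_apply, hx, smul_smul, ← sq, hj]
      rw [neg_one_smul, sub_neg_eq_add, ← two_smul K, smul_smul, inv_mul_cancel₀ h2, one_smul]
  rw [trace_restrict_eq_trace_comp_of_isProj hP]
  simp only [P, comp_smul, comp_sub, map_smul, map_sub, smul_eq_mul, Module.End.one_eq_id, comp_id]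
  rfl

theorem trace_restrict_baseChange_ker_sub_smul_eq_zero {F E M : Type*} [Field F] [Field E]
    [Algebra F E] [AddCommGroup M] [Module F M] [FiniteDimensional F M] {j : E}
    (hj : j ^ 2 = -1) (hjF : j ∉ Set.range (algebraMap F E)) {A T : Module.End F M}
    (hA : A * A = 1) (htrA : trace F M A = 0) (hT : T * T = -1)
    (hAW : ∀ x ∈ ker (T.baseChange E - j • LinearMap.id),
      A.baseChange E x ∈ ker (T.baseChange E - j • LinearMap.id)) :
    trace E _ ((A.baseChange E).restrict hAW) = 0 := by
  have h2 : (2 : E) ≠ 0 := by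
    -- in characteristic 2, `j ^ 2 = -1 = 1` would force `j = 1 ∈ F`
    intro h2
    refine hjF ⟨1, ?_⟩
    have : (j - 1) ^ 2 = 0 := by linear_combination hj - j * h2
    rw [map_one, eq_comm, ← sub_eq_zero]
    exact pow_eq_zero_iff two_ne_zero |>.mp this
  have hinv : (A.baseChange E).restrict hAW * (A.baseChange E).restrict hAW = 1 := by
    ext x
    change A.baseChange E (A.baseChange E x) = x
    rw [← Module.End.mul_apply, ← baseChange_mul, hA, baseChange_one, Module.End.one_apply]
  obtain ⟨n, hn⟩ := exists_trace_eq_intCast_of_mul_self_eq_one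
    (M := ker (T.baseChange E - j • LinearMap.id)) h2 hinv
  have hTE : T.baseChange E * T.baseChange E = -1 := by
    rw [← baseChange_mul, hT, baseChange_neg, baseChange_one]
  set t := trace F M (A * T)
  have hformula : 2 * trace E _ ((A.baseChange E).restrict hAW) = -(j * algebraMap F E t) := by
    rw [trace_restrict_ker_sub_smul_of_mul_self_eq_neg_one h2 hj hTE, ← baseChange_mul,
      trace_baseChange, trace_baseChange, htrA, map_zero, mul_inv_cancel_left₀ h2, zero_sub]
  have ht : t = 0 := by
    by_contra ht
    refine hjF ⟨-2 * n / t, ?_⟩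
    have : algebraMap F E t ≠ 0 := by simpa using ht
    rw [hn] at hformula
    simp only [map_div₀, map_mul, map_neg, map_ofNat, map_intCast]
    rw [div_eq_iff this]
    linear_combination -hformula
  rw [ht, map_zero, mul_zero, neg_zero, mul_eq_zero] at hformula
  exact hformula.resolve_left h2

end LinearMap

theorem trace_zero_on_eigenspaces_quadratic_case_general
    {F E : Type*} [Field F] [Field E] [Algebra F E]
    (hF : ¬ IsSquare (-1 : F))
    (j : E) (hj : j ^ 2 = -1)
    {V : Type*} [AddCommGroup V] [Module F V] [FiniteDimensional F V]
    {G : Type*} [Group G] (ρ : Representation F G V)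
    (N : Subgroup G)
    (J K : V →ₗ[F] V)
    (hJ : J ∘ₗ J = -LinearMap.id) (hK : K ∘ₗ K = -LinearMap.id)
    (hJK : J ∘ₗ K = -(K ∘ₗ J))
    (hcJ : ∀ g ∈ N, J ∘ₗ ρ g = ρ g ∘ₗ J)
    (hcK : ∀ g ∈ N, K ∘ₗ ρ g = ρ g ∘ₗ K)
    (haJ : ∀ g ∉ N, J ∘ₗ ρ g = -(ρ g ∘ₗ J))
    (haK : ∀ g ∉ N, K ∘ₗ ρ g = -(ρ g ∘ₗ K))
    (c : G) (hc : ρ c ∘ₗ ρ c = LinearMap.id)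
    (htr : LinearMap.trace F V (ρ c) = 0) :
    ∀ Wp Wm : Submodule E (E ⊗[F] V),
      Wp = LinearMap.ker ((J ∘ₗ K).baseChange E - j • LinearMap.id) →
      Wm = LinearMap.ker ((J ∘ₗ K).baseChange E + j • LinearMap.id) →
      (∀ x ∈ Wp, (ρ c).baseChange E x ∈ Wp) ∧
      (∀ x ∈ Wm, (ρ c).baseChange E x ∈ Wm) ∧
      (∀ hplus : ∀ x ∈ Wp, (ρ c).baseChange E x ∈ Wp,
        LinearMap.trace E ↥Wp (((ρ c).baseChange E).restrict hplus) = 0) ∧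
      (∀ hminus : ∀ x ∈ Wm, (ρ c).baseChange E x ∈ Wm,
        LinearMap.trace E ↥Wm (((ρ c).baseChange E).restrict hminus) = 0) := by
  rintro Wp Wm rfl hWm
  obtain rfl : Wm = ker ((J ∘ₗ K).baseChange E - (-j) • LinearMap.id) := by
    rw [hWm]
    congr 1
    module
  have hT : J * K * (J * K) = -1 := mul_mul_self_eq_neg_one_of_anticommute hJ hK hJK
  have hcomm : Commute (ρ c) (J * K) := by
    by_cases hcN : c ∈ N
    · exact (Commute.mul_left (hcJ c hcN) (hcK c hcN)).symm
    · exact (commute_mul_of_anticommute (haJ c hcN) (haK c hcN)).symm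
  have hcommE : Commute ((ρ c).baseChange E) ((J ∘ₗ K).baseChange E) :=
    hcomm.map (Module.End.baseChangeHom F E V)
  have hjF : j ∉ Set.range (algebraMap F E) := by
    rintro ⟨a, rfl⟩
    exact hF ⟨a, (algebraMap F E).injective (by simpa [← sq] using hj.symm)⟩
  have hjF' : -j ∉ Set.range (algebraMap F E) := by
    rintro ⟨a, ha⟩
    exact hjF ⟨-a, by rw [map_neg, ha, neg_neg]⟩
  exact ⟨mapsTo_ker_sub_smul_of_commute hcommE j, mapsTo_ker_sub_smul_of_commute hcommE (-j),
    fun h => trace_restrict_baseChange_ker_sub_smul_eq_zero hj hjF hc htr hT h,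
    fun h => trace_restrict_baseChange_ker_sub_smul_eq_zero (by rw [neg_sq, hj]) hjF' hc htr hT h⟩

/-- Proposition 3.1.5(c) and its consequence: for quaternion multiplication over a
quadratic field, if `ρ(c)` is an involution of trace `0` on `V`, then the restriction
of `ρ(c)` (after base change to `E = F(j)`) to each `±j`-eigenspace of `J ∘ K` has
trace `0`; i.e. the 2-dimensional constituent `σ` is odd at the complex conjugation. -/
theorem trace_zero_on_eigenspaces_quadratic_case
    {F E : Type*} [Field F] [Field E] [Algebra F E]
    (hF : ¬ IsSquare (-1 : F)) (hFE : Module.finrank F E = 2)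
    (j : E) (hj : j ^ 2 = -1)
    {V : Type*} [AddCommGroup V] [Module F V] [FiniteDimensional F V]
    (hdim : Module.finrank F V = 4)
    {G : Type*} [Group G] (ρ : Representation F G V)
    (N : Subgroup G) (hN : N ≠ ⊤)
    (J K : V →ₗ[F] V)
    (hJ : J ∘ₗ J = -LinearMap.id) (hK : K ∘ₗ K = -LinearMap.id)
    (hJK : J ∘ₗ K = -(K ∘ₗ J))
    (hcJ : ∀ g ∈ N, J ∘ₗ ρ g = ρ g ∘ₗ J)
    (hcK : ∀ g ∈ N, K ∘ₗ ρ g = ρ g ∘ₗ K)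
    (haJ : ∀ g ∉ N, J ∘ₗ ρ g = -(ρ g ∘ₗ J))
    (haK : ∀ g ∉ N, K ∘ₗ ρ g = -(ρ g ∘ₗ K))
    (c : G) (hc : ρ c ∘ₗ ρ c = LinearMap.id)
    (htr : LinearMap.trace F V (ρ c) = 0) :
    ∀ Wp Wm : Submodule E (E ⊗[F] V),
      Wp = LinearMap.ker ((J ∘ₗ K).baseChange E - j • LinearMap.id) →
      Wm = LinearMap.ker ((J ∘ₗ K).baseChange E + j • LinearMap.id) →
      (∀ x ∈ Wp, (ρ c).baseChange E x ∈ Wp) ∧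
      (∀ x ∈ Wm, (ρ c).baseChange E x ∈ Wm) ∧
      (∀ hplus : ∀ x ∈ Wp, (ρ c).baseChange E x ∈ Wp,
        LinearMap.trace E ↥Wp (((ρ c).baseChange E).restrict hplus) = 0) ∧
      (∀ hminus : ∀ x ∈ Wm, (ρ c).baseChange E x ∈ Wm,
        LinearMap.trace E ↥Wm (((ρ c).baseChange E).restrict hminus) = 0) :=
  trace_zero_on_eigenspaces_quadratic_case_general hF j hj ρ N J K hJ hK hJK hcJ hcK haJ haK c hc
    htr
end

section
/- Suppose c ∈ H_s, c ∉ H_t, and ρ(c) ∘ ρ(c) = id. Then the trace of ρ(c) ⊗ 1 restricted to ker(J_s⊗1 - j·id) ⊆ V ⊗_F E is 0. (Proposition 3.1.5(b) combined with Corollary 3.1.4(b): when the biquadratic field is not totally real, the 2-dimensional constituent σ_u is odd at the complex conjugation.) -/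
open LinearMap Module TensorProduct

/-!
Over `E`, the projection onto the `j`-eigenspace of `J = J_s ⊗ 1` is `(1 - j J) / 2`, and `ρ(c)`
commutes with `J`, so the trace of `ρ(c)` on that eigenspace is
`(tr ρ(c) - j · tr (ρ(c) J_s)) / 2`. Both traces vanish: `ρ(c)` anticommutes with the invertible
`J_t`, and `A = ρ(c) J_s` satisfies `A² = -1`. For the latter, the trace `r` of the projection
`(1 - j A) / 2` is a dimension, which gives `(tr A)² = -(n - 2r)²` in `F`; as `-1` is not a square
in `F`, this forces `tr A = 0`.
-/

theorem two_ne_zero_of_not_isSquare_neg_one {F K : Type*} [Field F] [Semiring K] [Nontrivial K]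
    [Algebra F K] (hF : ¬ IsSquare (-1 : F)) : (2 : K) ≠ 0 := by
  rw [← map_ofNat (algebraMap F K) 2]
  exact (map_ne_zero _).2 fun h => hF ⟨1, by linear_combination -h⟩

theorem eq_zero_of_sq_eq_neg_sq {F : Type*} [Field F] (hF : ¬ IsSquare (-1 : F)) {a b : F}
    (h : a ^ 2 = -b ^ 2) : a = 0 := by
  by_cases hb : b = 0
  · simpa [hb] using h
  · exact absurd ⟨a / b, by field_simp; linear_combination -h⟩ hF

namespace LinearMap

theorem trace_eq_zero_of_mul_eq_neg_mul {R M : Type*} [CommRing R] [NoZeroDivisors R]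
    [AddCommGroup M] [Module R M] (h2 : (2 : R) ≠ 0) {f J : Module.End R M} (hJ : IsUnit J)
    (h : J * f = -(f * J)) : trace R M f = 0 := by
  obtain ⟨J, rfl⟩ := hJ
  have hconj : (↑J⁻¹ : Module.End R M) * f * J = -f := by
    rw [mul_assoc, ← neg_eq_iff_eq_neg.2 h, mul_neg, Units.inv_mul_cancel_left]
  have hneg := trace_conj R f J⁻¹
  rw [inv_inv, hconj, map_neg] at hneg
  have h2t : (2 : R) * trace R M f = 0 := by linear_combination -hneg
  exact (mul_eq_zero.1 h2t).resolve_left h2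

theorem IsProj.trace_restrict {R M : Type*} [CommRing R] [IsDomain R] [IsPrincipalIdealRing R]
    [AddCommGroup M] [Module R M] [Module.Free R M] [Module.Finite R M]
    {p : Submodule R M} {P : Module.End R M} (hP : IsProj p P) (f : Module.End R M)
    (hf : ∀ x ∈ p, f x ∈ p) :
    LinearMap.trace R p (f.restrict hf) = LinearMap.trace R M (f * P) := by
  rw [← trace_restrict_eq_of_forall_mem p (f * P) fun x => hf _ (hP.map_mem x)]
  congr 1
  ext ⟨x, hx⟩
  simp [hP.map_id x hx]

section QuaternionUnit

variable {K M : Type*} [Field K] [AddCommGroup M] [Module K M] {j : K} {J : Module.End K M}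

theorem isProj_ker_sub_smul_id (h2 : (2 : K) ≠ 0) (hj : j ^ 2 = -1) (hJ : J * J = -1) :
    IsProj (ker (J - j • LinearMap.id)) ((2 : K)⁻¹ • (1 - j • J)) := by
  have hJJ (x : M) : J (J x) = -x := by simpa using LinearMap.congr_fun hJ x
  constructor
  · intro x
    simp only [mem_ker, LinearMap.sub_apply, LinearMap.smul_apply, Module.End.one_apply,
      id_apply, map_smul, map_sub, hJJ]
    linear_combination (norm := module) ((2 : K)⁻¹ * hj) • J x
  · intro x hx
    rw [mem_ker, LinearMap.sub_apply, LinearMap.smul_apply, id_apply, sub_eq_zero] at hx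
    have h2x : x - j • j • x = (2 : K) • x := by linear_combination (norm := module) (-hj) • x
    simp only [LinearMap.smul_apply, LinearMap.sub_apply, Module.End.one_apply, hx, h2x,
      inv_smul_smul₀ h2]

theorem trace_restrict_ker_sub_smul_id [FiniteDimensional K M] (h2 : (2 : K) ≠ 0)
    (hj : j ^ 2 = -1) (hJ : J * J = -1) (f : Module.End K M)
    (hf : ∀ x ∈ ker (J - j • LinearMap.id), f x ∈ ker (J - j • LinearMap.id)) :
    trace K _ (f.restrict hf) = 2⁻¹ * (trace K M f - j * trace K M (f * J)) := by
  rw [(isProj_ker_sub_smul_id h2 hj hJ).trace_restrict, mul_smul_comm, mul_sub, mul_one,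
    mul_smul_comm, map_smul, map_sub, map_smul, smul_eq_mul, smul_eq_mul]

end QuaternionUnit

theorem trace_eq_zero_of_mul_self_eq_neg_one {F E V : Type*} [Field F] [Field E]
    [Algebra F E] [AddCommGroup V] [Module F V] [FiniteDimensional F V]
    (hF : ¬ IsSquare (-1 : F)) {j : E} (hj : j ^ 2 = -1) {A : Module.End F V}
    (hA : A * A = -1) : trace F V A = 0 := by
  have hAE : A.baseChange E * A.baseChange E = -1 := by
    rw [← baseChange_mul, hA, baseChange_neg, baseChange_one]
  have := Module.Free.of_divisionRing E (ker (A.baseChange E - j • LinearMap.id))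
  have := Module.Free.of_divisionRing E (ker ((2 : E)⁻¹ • (1 - j • A.baseChange E)))
  have h2 : (2 : E) ≠ 0 := two_ne_zero_of_not_isSquare_neg_one hF
  have hP := (isProj_ker_sub_smul_id h2 hj hAE).trace
  rw [map_smul, map_sub (trace E (E ⊗[F] V)), map_smul, trace_one, trace_baseChange,
    smul_eq_mul, smul_eq_mul] at hP
  set n := finrank E (E ⊗[F] V)
  set r := finrank E (ker (A.baseChange E - j • LinearMap.id))
  have hjt : (n : E) - j * algebraMap F E (trace F V A) = 2 * r := by
    rw [← hP, mul_inv_cancel_left₀ h2]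
  apply eq_zero_of_sq_eq_neg_sq hF (b := (n : F) - 2 * r)
  apply (algebraMap F E).injective
  simp only [map_pow, map_neg, map_sub, map_mul, map_natCast, map_ofNat]
  linear_combination (n - 2 * r + j * algebraMap F E (trace F V A)) * hjt
    + (algebraMap F E (trace F V A)) ^ 2 * hj

end LinearMap

theorem trace_zero_on_eigenspace_biquadratic_case_general
    {F E : Type*} [Field F] [Field E] [Algebra F E]
    (hF : ¬ IsSquare (-1 : F))
    (j : E) (hj : j ^ 2 = -1)
    {V : Type*} [AddCommGroup V] [Module F V] [FiniteDimensional F V]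
    {G : Type*} [Group G] (ρ : Representation F G V)
    (Hs Ht : Subgroup G)
    (Js Jt : V →ₗ[F] V)
    (hJs : Js ∘ₗ Js = -LinearMap.id) (hJt : Jt ∘ₗ Jt = -LinearMap.id)
    (hcs : ∀ g ∈ Hs, Js ∘ₗ ρ g = ρ g ∘ₗ Js)
    (hat : ∀ g ∉ Ht, Jt ∘ₗ ρ g = -(ρ g ∘ₗ Jt))
    (c : G) (hcHs : c ∈ Hs) (hcHt : c ∉ Ht)
    (hc : ρ c ∘ₗ ρ c = LinearMap.id) :
    ∀ Wp : Submodule E (E ⊗[F] V),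
      Wp = LinearMap.ker (Js.baseChange E - j • LinearMap.id) →
      (∀ x ∈ Wp, (ρ c).baseChange E x ∈ Wp) ∧
      ∀ hplus : ∀ x ∈ Wp, (ρ c).baseChange E x ∈ Wp,
        LinearMap.trace E ↥Wp (((ρ c).baseChange E).restrict hplus) = 0 := by
  rintro Wp rfl
  have hJs' : Js * Js = -1 := hJs
  have hcomm : Js * ρ c = ρ c * Js := hcs c hcHs
  have hJsE : Js.baseChange E * Js.baseChange E = -1 := by
    rw [← baseChange_mul, hJs', baseChange_neg, baseChange_one]
  refine ⟨fun x hx => ?_, fun hplus => ?_⟩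
  · rw [mem_ker, LinearMap.sub_apply, sub_eq_zero] at hx ⊢
    rw [← Module.End.mul_apply, ← baseChange_mul, hcomm, baseChange_mul, Module.End.mul_apply,
      hx, LinearMap.smul_apply, id_apply, map_smul, LinearMap.smul_apply, id_apply]
  have htr : trace F V (ρ c) = 0 :=
    trace_eq_zero_of_mul_eq_neg_mul (two_ne_zero_of_not_isSquare_neg_one hF)
      (IsUnit.of_mul_eq_one (-Jt) (by rw [mul_neg]; exact neg_eq_iff_eq_neg.2 hJt))
      (hat c hcHt)
  have htrJ : trace F V (ρ c * Js) = 0 := by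
    refine trace_eq_zero_of_mul_self_eq_neg_one hF hj ?_
    rw [mul_assoc, ← mul_assoc Js, hcomm, mul_assoc, ← mul_assoc, show ρ c * ρ c = 1 from hc,
      one_mul, hJs']
  rw [trace_restrict_ker_sub_smul_id (two_ne_zero_of_not_isSquare_neg_one hF) hj hJsE,
    ← baseChange_mul, trace_baseChange, trace_baseChange, htr, htrJ]
  simp

/-- Proposition 3.1.5(b) combined with Corollary 3.1.4(b): for quaternion
multiplication over a biquadratic field which is not totally real (i.e. the complex
conjugation `c` lies in `H_s` but not in `H_t`), if `ρ(c)` is an involution then the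
restriction of `ρ(c)` (after base change to `E = F(j)`) to the `+j`-eigenspace of
`J_s` has trace `0`; i.e. the constituent `σ_u` is odd at the complex conjugation. -/
theorem trace_zero_on_eigenspace_biquadratic_case
    {F E : Type*} [Field F] [Field E] [Algebra F E]
    (hF : ¬ IsSquare (-1 : F)) (hFE : Module.finrank F E = 2)
    (j : E) (hj : j ^ 2 = -1)
    {V : Type*} [AddCommGroup V] [Module F V] [FiniteDimensional F V]
    (hdim : Module.finrank F V = 4)
    {G : Type*} [Group G] (ρ : Representation F G V)
    (Hs Ht : Subgroup G) (hne : Hs ≠ Ht) (hHs : Hs ≠ ⊤) (hHt : Ht ≠ ⊤)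
    (Js Jt : V →ₗ[F] V)
    (hJs : Js ∘ₗ Js = -LinearMap.id) (hJt : Jt ∘ₗ Jt = -LinearMap.id)
    (hanticomm : Js ∘ₗ Jt = -(Jt ∘ₗ Js))
    (hcs : ∀ g ∈ Hs, Js ∘ₗ ρ g = ρ g ∘ₗ Js)
    (has : ∀ g ∉ Hs, Js ∘ₗ ρ g = -(ρ g ∘ₗ Js))
    (hct : ∀ g ∈ Ht, Jt ∘ₗ ρ g = ρ g ∘ₗ Jt)
    (hat : ∀ g ∉ Ht, Jt ∘ₗ ρ g = -(ρ g ∘ₗ Jt))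
    (c : G) (hcHs : c ∈ Hs) (hcHt : c ∉ Ht)
    (hc : ρ c ∘ₗ ρ c = LinearMap.id) :
    ∀ Wp : Submodule E (E ⊗[F] V),
      Wp = LinearMap.ker (Js.baseChange E - j • LinearMap.id) →
      (∀ x ∈ Wp, (ρ c).baseChange E x ∈ Wp) ∧
      ∀ hplus : ∀ x ∈ Wp, (ρ c).baseChange E x ∈ Wp,
        LinearMap.trace E ↥Wp (((ρ c).baseChange E).restrict hplus) = 0 :=
  trace_zero_on_eigenspace_biquadratic_case_general hF j hj ρ Hs Ht Js Jt hJs hJt hcs hat c hcHs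
    hcHt hc
end

section
/- If the only E-subspaces of V invariant under ρ(g) for all g ∈ G are 0 and V, then the only E-subspaces of W₊ invariant under ρ(g) for all g ∈ H are 0 and W₊. (Last assertion of Theorem 3.1.2(1): σ_u is irreducible whenever ρ ⊗ E is irreducible.) -/
open LinearMap Module

/-- Last assertion of Theorem 3.1.2(1): if `ρ` is irreducible (the only `G`-invariant
subspaces of `V` are `0` and `V`), then the representation of `H` on the
`+i`-eigenspace `W₊` of `J` is irreducible (the only `H`-invariant subspaces of `W₊`
are `0` and `W₊`). -/
theorem QM_constituent_irreducible
    {E : Type*} [Field E] (htwo : (2 : E) ≠ 0) (i : E) (hi : i ^ 2 = -1)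
    {V : Type*} [AddCommGroup V] [Module E V] (hdim : Module.finrank E V = 4)
    {G : Type*} [Group G] (ρ : Representation E G V)
    (H : Subgroup G) (hH : H ≠ ⊤)
    (J : V →ₗ[E] V) (hJ : J ∘ₗ J = -LinearMap.id)
    (hcomm : ∀ g ∈ H, J ∘ₗ ρ g = ρ g ∘ₗ J)
    (hanti : ∀ g ∉ H, J ∘ₗ ρ g = -(ρ g ∘ₗ J))
    (hirr : ∀ U : Submodule E V, (∀ g : G, ∀ v ∈ U, ρ g v ∈ U) → U = ⊥ ∨ U = ⊤) :
    ∀ U : Submodule E V, U ≤ LinearMap.ker (J - i • LinearMap.id) →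
      (∀ g ∈ H, ∀ v ∈ U, ρ g v ∈ U) →
      U = ⊥ ∨ U = LinearMap.ker (J - i • LinearMap.id) := by
  intro U hUle hUinv
  -- pointwise versions
  have hJJ : ∀ v : V, J (J v) = -v := fun v => by
    have := LinearMap.ext_iff.mp hJ v; simpa using this
  have hC : ∀ g ∈ H, ∀ v : V, J (ρ g v) = ρ g (J v) := fun g hg v => by
    have := LinearMap.ext_iff.mp (hcomm g hg) v; simpa using this
  have hA : ∀ g ∉ H, ∀ v : V, J (ρ g v) = -(ρ g (J v)) := fun g hg v => by
    have := LinearMap.ext_iff.mp (hanti g hg) v; simpa using this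
  have hnt : Nontrivial V := by
    apply Module.nontrivial_of_finrank_pos (R := E); omega
  -- ρ g is injective
  have hρinj : ∀ g : G, Function.Injective (ρ g) := by
    intro g v w h
    have h2 := congrArg (ρ g⁻¹) h
    rwa [← Module.End.mul_apply, ← map_mul, inv_mul_cancel, map_one,
      ← Module.End.mul_apply (ρ g⁻¹), ← map_mul, inv_mul_cancel, map_one,
      Module.End.one_apply, Module.End.one_apply] at h2
  -- cannot both commute and anticommute
  have hnc : ∀ g : G, ¬ ((∀ v : V, J (ρ g v) = ρ g (J v)) ∧
      (∀ v : V, J (ρ g v) = -(ρ g (J v)))) := by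
    rintro g ⟨h1, h2⟩
    obtain ⟨v, hv⟩ := exists_ne (0 : V)
    have hJv : J v ≠ 0 := by
      intro h
      apply hv
      have := hJJ v
      rw [h, map_zero] at this
      simpa using this.symm
    have h3 : ρ g (J v) ≠ 0 := by
      intro h
      exact hJv (hρinj g (by simpa using h))
    have h4 : ρ g (J v) + ρ g (J v) = 0 := by
      have := (h1 v).symm.trans (h2 v)
      linear_combination (norm := abel) this
    have h5 : (2 : E) • ρ g (J v) = 0 := by rw [two_smul]; exact h4
    rcases smul_eq_zero.mp h5 with h | h
    · exact htwo h
    · exact h3 h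
  -- membership characterization and multiplication rules
  have hmemC : ∀ g : G, (∀ v : V, J (ρ g v) = ρ g (J v)) → g ∈ H := by
    intro g h
    by_contra hg
    exact hnc g ⟨h, hA g hg⟩
  have hmemA : ∀ g : G, (∀ v : V, J (ρ g v) = -(ρ g (J v))) → g ∉ H := by
    intro g h hg
    exact hnc g ⟨hC g hg, h⟩
  have happ : ∀ (g h : G) (v : V), ρ (g * h) v = ρ g (ρ h v) := by
    intro g h v; rw [map_mul]; rfl
  have hmul_nn : ∀ g h : G, g ∉ H → h ∉ H → g * h ∈ H := by
    intro g h hg hh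
    apply hmemC
    intro v
    rw [happ, hA g hg, hA h hh, map_neg, neg_neg, happ]
  have hmul_nm : ∀ g h : G, g ∉ H → h ∈ H → g * h ∉ H := by
    intro g h hg hh
    apply hmemA
    intro v
    rw [happ, hA g hg, hC h hh, happ]
  -- pick g₀ outside H
  obtain ⟨g₀, hg₀⟩ : ∃ g, g ∉ H := by
    by_contra h
    push_neg at h
    exact hH ((Subgroup.eq_top_iff' H).mpr h)
  have hg₀inv : g₀⁻¹ ∉ H := fun h => hg₀ (by simpa using H.inv_mem h)
  have hconj : ∀ g ∈ H, g₀⁻¹ * g * g₀ ∈ H := fun g hg =>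
    hmul_nn _ _ (hmul_nm _ _ hg₀inv hg) hg₀
  -- the G-invariant subspace U ⊔ ρ(g₀) U
  set U' : Submodule E V := U ⊔ Submodule.map (ρ g₀) U with hU'def
  have hU'inv : ∀ g : G, ∀ v ∈ U', ρ g v ∈ U' := by
    intro g v hv
    rcases Submodule.mem_sup.mp hv with ⟨u, hu, w, hw, rfl⟩
    rcases Submodule.mem_map.mp hw with ⟨u', hu', rfl⟩
    rw [map_add]
    by_cases hg : g ∈ H
    · apply Submodule.add_mem
      · exact Submodule.mem_sup_left (hUinv g hg u hu)
      · apply Submodule.mem_sup_right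
        have : ρ g (ρ g₀ u') = ρ g₀ (ρ (g₀⁻¹ * g * g₀) u') := by
          rw [← happ, ← happ]
          congr 1
          group
        rw [this]
        exact Submodule.mem_map_of_mem (hUinv _ (hconj g hg) u' hu')
    · apply Submodule.add_mem
      · apply Submodule.mem_sup_right
        have : ρ g u = ρ g₀ (ρ (g₀⁻¹ * g) u) := by
          rw [← happ]
          congr 1
          group
        rw [this]
        exact Submodule.mem_map_of_mem (hUinv _ (hmul_nn _ _ hg₀inv hg) u hu)
      · apply Submodule.mem_sup_left
        rw [← happ]
        exact hUinv _ (hmul_nn _ _ hg hg₀) u' hu'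
  rcases hirr U' hU'inv with h | h
  · left
    exact le_bot_iff.mp (le_sup_left.trans h.le)
  · right
    apply le_antisymm hUle
    intro w hw
    -- w is in the i-eigenspace
    have hwi : J w = i • w := by
      have := LinearMap.mem_ker.mp hw
      have h2 : J w - i • w = 0 := by simpa using this
      linear_combination (norm := abel) h2
    have hwU' : w ∈ U' := h ▸ Submodule.mem_top
    rcases Submodule.mem_sup.mp hwU' with ⟨u, hu, x, hx, hsum⟩
    rcases Submodule.mem_map.mp hx with ⟨u', hu', rfl⟩
    -- u and u' are in the i-eigenspace
    have hui : J u = i • u := by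
      have := LinearMap.mem_ker.mp (hUle hu)
      have h2 : J u - i • u = 0 := by simpa using this
      linear_combination (norm := abel) h2
    have hu'i : J u' = i • u' := by
      have := LinearMap.mem_ker.mp (hUle hu')
      have h2 : J u' - i • u' = 0 := by simpa using this
      linear_combination (norm := abel) h2
    -- ρ g₀ u' is in the -i eigenspace
    have hxneg : J (ρ g₀ u') = -(i • ρ g₀ u') := by
      rw [hA g₀ hg₀, hu'i, map_smul]
    -- combine: 2 i • ρ g₀ u' = 0
    have key : (2 * i) • ρ g₀ u' = 0 := by
      have h1 : J w = J u + J (ρ g₀ u') := by rw [← hsum, map_add]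
      rw [hwi, ← hsum, hui, hxneg, smul_add] at h1
      have h2 : i • ρ g₀ u' + i • ρ g₀ u' = 0 := by
        linear_combination (norm := abel) h1
      rw [mul_smul, two_smul]
      exact h2
    have hi0 : i ≠ 0 := by
      intro h
      rw [h] at hi
      norm_num at hi
    have h2i : (2 * i) ≠ 0 := mul_ne_zero htwo hi0
    have hx0 : ρ g₀ u' = 0 := by
      rcases smul_eq_zero.mp key with h | h
      · exact absurd h h2i
      · exact h
    rw [← hsum, hx0, add_zero]
    exact hu
end

section
/- If for every g ∈ G there exists a 2×2 matrix P over E with ρ(g) = P ⊗ₖ γ(g), then there exists a group homomorphism η : G → GL₂(E) such that ρ(g) = η(g) ⊗ₖ γ(g) for all g ∈ G. (Key step in the proof of Theorem 3.2.1: once the second projective tensor factor is lifted to an ordinary representation γ, the first factor can be rescaled to an ordinary representation η with ρ = η ⊗ γ.) -/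
open Matrix Kronecker

lemma kron_right_cancel' {E : Type*} [Field E]
    {A B Q : Matrix (Fin 2) (Fin 2) E} (hQ : Q ≠ 0)
    (h : A ⊗ₖ Q = B ⊗ₖ Q) : A = B := by
  obtain ⟨k, l, hkl⟩ : ∃ k l, Q k l ≠ 0 := by
    by_contra hc
    push_neg at hc
    exact hQ (by ext k l; simp [hc])
  ext i j
  have := congrFun (congrFun h (i, k)) (j, l)
  simp only [Matrix.kroneckerMap_apply] at this
  exact mul_right_cancel₀ hkl this

/-- Key step in the proof of Theorem 3.2.1: if every `ρ(g)` factors as a Kronecker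
product `P ⊗ₖ γ(g)` for some 2×2 matrix `P`, then the first factor can be chosen to
be a group homomorphism `η : G → GL₂(E)` with `ρ = η ⊗ γ`. -/
theorem lift_first_tensor_factor
    {E : Type*} [Field E] {G : Type*} [Group G]
    (ρ : G →* GL (Fin 2 × Fin 2) E) (γ : G →* GL (Fin 2) E)
    (h : ∀ g : G, ∃ P : Matrix (Fin 2) (Fin 2) E,
      (ρ g : Matrix (Fin 2 × Fin 2) (Fin 2 × Fin 2) E)
        = P ⊗ₖ (γ g : Matrix (Fin 2) (Fin 2) E)) :
    ∃ η : G →* GL (Fin 2) E, ∀ g : G,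
      (ρ g : Matrix (Fin 2 × Fin 2) (Fin 2 × Fin 2) E)
        = (η g : Matrix (Fin 2) (Fin 2) E) ⊗ₖ (γ g : Matrix (Fin 2) (Fin 2) E) := by
  choose P hP using h
  have hγ : ∀ g : G, (γ g : Matrix (Fin 2) (Fin 2) E) ≠ 0 := by
    intro g hzero
    have : ((γ g : Matrix (Fin 2) (Fin 2) E) * ((γ g)⁻¹ : GL (Fin 2) E))
        = (1 : Matrix (Fin 2) (Fin 2) E) := by
      exact_mod_cast (γ g).mul_inv
    rw [hzero, zero_mul] at this
    exact one_ne_zero this.symm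
  have hmul : ∀ g₁ g₂ : G, P (g₁ * g₂) = P g₁ * P g₂ := by
    intro g₁ g₂
    apply kron_right_cancel' (hγ (g₁ * g₂))
    rw [← hP (g₁ * g₂)]
    have : (γ (g₁ * g₂) : Matrix (Fin 2) (Fin 2) E)
        = (γ g₁ : Matrix (Fin 2) (Fin 2) E) * (γ g₂ : Matrix (Fin 2) (Fin 2) E) := by
      rw [_root_.map_mul]; rfl
    rw [_root_.map_mul]
    rw [Units.val_mul, hP g₁, hP g₂, ← Matrix.mul_kronecker_mul, this]
  have hunit : ∀ g : G, IsUnit (P g) := by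
    intro g
    rw [Matrix.isUnit_iff_isUnit_det]
    have hdet : IsUnit ((ρ g : Matrix (Fin 2 × Fin 2) (Fin 2 × Fin 2) E).det) :=
      (Matrix.isUnit_iff_isUnit_det _).mp (ρ g).isUnit
    rw [hP g, Matrix.det_kronecker] at hdet
    exact (isUnit_pow_iff (by norm_num)).mp (isUnit_of_mul_isUnit_left hdet)
  refine ⟨MonoidHom.mk' (fun g => (hunit g).unit) ?_, ?_⟩
  · intro g₁ g₂
    ext : 1
    simp only [Units.val_mul, IsUnit.unit_spec]
    try exact hmul g₁ g₂
  · intro g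
    rw [hP g]
    congr 1
end

section
/- For every g ∈ H_s and every τ ∈ G \ H_s, the element τgτ⁻¹ lies in H_s, ρ(τgτ⁻¹) preserves W₊, and the trace of ρ(τgτ⁻¹) restricted to W₊ equals δ(g) times the trace of ρ(g) restricted to W₊. (Corollary 3.1.4(b): Tr σ_u^τ(c) = Tr σ_u(c) if c lies in the intersection subgroup, and Tr σ_u^τ(c) = -Tr σ_u(c) otherwise.) -/
open LinearMap Module

set_option maxHeartbeats 1000000

/-- Corollary 3.1.4(b): for `g ∈ H_s` and `τ ∉ H_s`, the conjugate `τgτ⁻¹` lies in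
`H_s`, preserves the `+i`-eigenspace `W₊` of `J_s`, and the trace of `ρ(τgτ⁻¹)` on
`W₊` equals `δ(g)` times the trace of `ρ(g)` on `W₊`, where `δ(g) = 1` if `g ∈ H_t`
and `δ(g) = -1` otherwise. -/
theorem trace_of_conjugate_twist
    {E : Type*} [Field E] (htwo : (2 : E) ≠ 0) (i : E) (hi : i ^ 2 = -1)
    {V : Type*} [AddCommGroup V] [Module E V] [FiniteDimensional E V]
    (hdim : Module.finrank E V = 4)
    {G : Type*} [Group G] (ρ : Representation E G V)
    (Hs Ht : Subgroup G) (hne : Hs ≠ Ht) (hHs : Hs ≠ ⊤) (hHt : Ht ≠ ⊤)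
    (Js Jt : V →ₗ[E] V)
    (hJs : Js ∘ₗ Js = -LinearMap.id) (hJt : Jt ∘ₗ Jt = -LinearMap.id)
    (hanticomm : Js ∘ₗ Jt = -(Jt ∘ₗ Js))
    (hcs : ∀ g ∈ Hs, Js ∘ₗ ρ g = ρ g ∘ₗ Js)
    (has : ∀ g ∉ Hs, Js ∘ₗ ρ g = -(ρ g ∘ₗ Js))
    (hct : ∀ g ∈ Ht, Jt ∘ₗ ρ g = ρ g ∘ₗ Jt)
    (hat : ∀ g ∉ Ht, Jt ∘ₗ ρ g = -(ρ g ∘ₗ Jt)) :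
    ∀ g ∈ Hs, ∀ τ ∉ Hs,
      τ * g * τ⁻¹ ∈ Hs ∧
      (∀ x ∈ LinearMap.ker (Js - i • LinearMap.id),
        ρ (τ * g * τ⁻¹) x ∈ LinearMap.ker (Js - i • LinearMap.id)) ∧
      (∀ x ∈ LinearMap.ker (Js - i • LinearMap.id),
        ρ g x ∈ LinearMap.ker (Js - i • LinearMap.id)) ∧
      ∀ (h₁ : ∀ x ∈ LinearMap.ker (Js - i • LinearMap.id),
          ρ (τ * g * τ⁻¹) x ∈ LinearMap.ker (Js - i • LinearMap.id))
        (h₂ : ∀ x ∈ LinearMap.ker (Js - i • LinearMap.id),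
          ρ g x ∈ LinearMap.ker (Js - i • LinearMap.id)),
        (g ∈ Ht →
          LinearMap.trace E ↥(LinearMap.ker (Js - i • LinearMap.id))
              ((ρ (τ * g * τ⁻¹)).restrict h₁)
            = LinearMap.trace E ↥(LinearMap.ker (Js - i • LinearMap.id))
              ((ρ g).restrict h₂)) ∧
        (g ∉ Ht →
          LinearMap.trace E ↥(LinearMap.ker (Js - i • LinearMap.id))
              ((ρ (τ * g * τ⁻¹)).restrict h₁)
            = -LinearMap.trace E ↥(LinearMap.ker (Js - i • LinearMap.id))
              ((ρ g).restrict h₂)) := by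
  intro g hg τ hτ
  set W : Submodule E V := LinearMap.ker (Js - i • LinearMap.id) with hWdef
  set W' : Submodule E V := LinearMap.ker (Js + i • LinearMap.id) with hW'def
  -- membership characterizations
  have hmemW : ∀ x : V, x ∈ W ↔ Js x = i • x := by
    intro x
    simp [hWdef, LinearMap.mem_ker, sub_eq_zero]
  have hmemW' : ∀ x : V, x ∈ W' ↔ Js x = -(i • x) := by
    intro x
    simp [hW'def, LinearMap.mem_ker, add_eq_zero_iff_eq_neg]
  have hτinv : τ⁻¹ ∉ Hs := fun h => hτ (by simpa using Hs.inv_mem h)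
  -- commutation of Js with ρ (τ * g * τ⁻¹)
  have hexp : ∀ x : V, ρ (τ * g * τ⁻¹) x = ρ τ (ρ g (ρ τ⁻¹ x)) := by
    intro x
    simp [map_mul, Module.End.mul_apply]
  have f1 : ∀ y, Js (ρ τ y) = -(ρ τ (Js y)) := by
    intro y
    have := DFunLike.congr_fun (has τ hτ) y
    simpa using this
  have f2 : ∀ y, Js (ρ g y) = ρ g (Js y) := by
    intro y
    have := DFunLike.congr_fun (hcs g hg) y
    simpa using this
  have f3 : ∀ y, Js (ρ τ⁻¹ y) = -(ρ τ⁻¹ (Js y)) := by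
    intro y
    have := DFunLike.congr_fun (has τ⁻¹ hτinv) y
    simpa using this
  have h2 : Js ∘ₗ ρ (τ * g * τ⁻¹) = ρ (τ * g * τ⁻¹) ∘ₗ Js := by
    ext x
    simp only [LinearMap.comp_apply, hexp]
    rw [f1, f2, f3]
    simp
  -- τ * g * τ⁻¹ ∈ Hs
  have hmem : τ * g * τ⁻¹ ∈ Hs := by
    by_contra hmem
    have h1 := has _ hmem
    rw [h2] at h1
    have hzero : ρ (τ * g * τ⁻¹) ∘ₗ Js = 0 := by
      have h3 : (2 : E) • (ρ (τ * g * τ⁻¹) ∘ₗ Js) = 0 := by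
        rw [two_smul]
        nth_rewrite 1 [h1]
        simp
      rcases smul_eq_zero.mp h3 with h | h
      · exact absurd h htwo
      · exact h
    have hinj : ∀ u : G, ∀ v : V, ρ u v = 0 → v = 0 := by
      intro u v hv
      have huv : ρ u⁻¹ (ρ u v) = v := by
        rw [← Module.End.mul_apply, ← map_mul, inv_mul_cancel, map_one,
          Module.End.one_apply]
      rw [hv, map_zero] at huv
      exact huv.symm
    have hnontriv : Nontrivial V := by
      apply Module.nontrivial_of_finrank_pos (R := E)
      omega
    obtain ⟨x, hx⟩ := exists_ne (0 : V)
    have hJsx : Js x ≠ 0 := by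
      intro h
      have := DFunLike.congr_fun hJs x
      simp [h] at this
      exact hx this
    have hz := DFunLike.congr_fun hzero x
    simp only [LinearMap.comp_apply, LinearMap.zero_apply] at hz
    exact hJsx (hinj _ _ hz)
  refine ⟨hmem, ?_, ?_, ?_⟩
  · intro x hx
    rw [hmemW] at hx ⊢
    have := DFunLike.congr_fun h2 x
    simp only [LinearMap.comp_apply] at this
    rw [this, hx, map_smul]
  · intro x hx
    rw [hmemW] at hx ⊢
    rw [f2, hx, map_smul]
  intro h₁ h₂
  -- skew maps send W to W' and vice versa
  have skewWW' : ∀ (f : V →ₗ[E] V), (∀ y, Js (f y) = -(f (Js y))) →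
      ∀ x ∈ W, f x ∈ W' := by
    intro f hf x hx
    rw [hmemW] at hx
    rw [hmemW', hf, hx, map_smul]
  have skewW'W : ∀ (f : V →ₗ[E] V), (∀ y, Js (f y) = -(f (Js y))) →
      ∀ x ∈ W', f x ∈ W := by
    intro f hf x hx
    rw [hmemW'] at hx
    rw [hmemW, hf, hx]
    simp [map_smul]
  have commW'W' : ∀ (f : V →ₗ[E] V), (∀ y, Js (f y) = f (Js y)) →
      ∀ x ∈ W', f x ∈ W' := by
    intro f hf x hx
    rw [hmemW'] at hx
    rw [hmemW', hf, hx]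
    simp [map_smul]
  -- Jt is skew wrt Js
  have fJt : ∀ y, Js (Jt y) = -(Jt (Js y)) := by
    intro y
    have := DFunLike.congr_fun hanticomm y
    simpa using this
  have fJt' : ∀ y, Js ((-Jt) y) = -((-Jt) (Js y)) := by
    intro y
    simp [fJt]
  -- restricted maps
  have hA : ∀ x ∈ W', ρ τ x ∈ W := skewW'W (ρ τ) f1
  have hA' : ∀ x ∈ W, ρ τ⁻¹ x ∈ W' := skewWW' (ρ τ⁻¹) f3
  have hBg' : ∀ x ∈ W', ρ g x ∈ W' := commW'W' (ρ g) f2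
  have hK : ∀ x ∈ W, Jt x ∈ W' := skewWW' Jt fJt
  have hK' : ∀ x ∈ W', (-Jt) x ∈ W := skewW'W (-Jt) fJt'
  set A : W' →ₗ[E] W := (ρ τ).restrict hA with hAdef
  set A' : W →ₗ[E] W' := (ρ τ⁻¹).restrict hA' with hA'def
  set Bg' : W' →ₗ[E] W' := (ρ g).restrict hBg' with hBg'def
  set Bg : W →ₗ[E] W := (ρ g).restrict h₂ with hBgdef
  set Bh : W →ₗ[E] W := (ρ (τ * g * τ⁻¹)).restrict h₁ with hBhdef
  set K : W →ₗ[E] W' := Jt.restrict hK with hKdef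
  set K' : W' →ₗ[E] W := (-Jt).restrict hK' with hK'def
  -- step 1: trace Bh = trace Bg'
  have hcompAA' : A' ∘ₗ A = LinearMap.id := by
    ext x
    simp only [LinearMap.comp_apply, hA'def, hAdef, LinearMap.restrict_coe_apply,
      LinearMap.id_coe, id_eq]
    rw [← Module.End.mul_apply, ← map_mul]
    simp
  have hBh_eq : Bh = A ∘ₗ (Bg' ∘ₗ A') := by
    ext x
    simp only [hBhdef, hAdef, hBg'def, hA'def, LinearMap.comp_apply,
      LinearMap.restrict_coe_apply]
    exact hexp x
  have step1 : LinearMap.trace E W Bh = LinearMap.trace E W' Bg' := by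
    rw [hBh_eq, LinearMap.trace_comp_comm', LinearMap.comp_assoc, hcompAA',
      LinearMap.comp_id]
  -- step 2: relate trace Bg' and trace Bg via K, K'
  have hcompKK' : K' ∘ₗ K = LinearMap.id := by
    ext x
    simp only [hK'def, hKdef, LinearMap.comp_apply, LinearMap.restrict_coe_apply,
      LinearMap.id_coe, id_eq, LinearMap.neg_apply]
    have := DFunLike.congr_fun hJt (x : V)
    simp only [LinearMap.comp_apply, LinearMap.neg_apply, LinearMap.id_apply] at this
    rw [this]
    simp
  constructor
  · -- g ∈ Ht : Jt commutes with ρ g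
    intro hgt
    have fc : ∀ y, Jt (ρ g y) = ρ g (Jt y) := by
      intro y
      have := DFunLike.congr_fun (hct g hgt) y
      simpa using this
    have hBg'_eq : Bg' = K ∘ₗ (Bg ∘ₗ K') := by
      ext x
      simp only [hBg'def, hKdef, hBgdef, hK'def, LinearMap.comp_apply,
        LinearMap.restrict_coe_apply, LinearMap.neg_apply]
      have hsq := DFunLike.congr_fun hJt (x : V)
      simp only [LinearMap.comp_apply, LinearMap.neg_apply, LinearMap.id_apply] at hsq
      simp [map_neg, fc, hsq]
    rw [step1, hBg'_eq, LinearMap.trace_comp_comm', LinearMap.comp_assoc, hcompKK',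
      LinearMap.comp_id]
  · -- g ∉ Ht : Jt anticommutes with ρ g
    intro hgt
    have fc : ∀ y, Jt (ρ g y) = -(ρ g (Jt y)) := by
      intro y
      have := DFunLike.congr_fun (hat g hgt) y
      simpa using this
    have hBg'_eq : Bg' = -(K ∘ₗ (Bg ∘ₗ K')) := by
      ext x
      simp only [hBg'def, hKdef, hBgdef, hK'def, LinearMap.comp_apply,
        LinearMap.restrict_coe_apply, LinearMap.neg_apply, Submodule.coe_neg]
      have hsq := DFunLike.congr_fun hJt (x : V)
      simp only [LinearMap.comp_apply, LinearMap.neg_apply, LinearMap.id_apply] at hsq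
      simp [map_neg, fc, hsq]
    rw [step1, hBg'_eq, map_neg, LinearMap.trace_comp_comm', LinearMap.comp_assoc,
      hcompKK', LinearMap.comp_id]
end
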